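/- arXiv:2109.12775 — 11 statements merged into one kernel-verified Lean document; each statement's English description precedes it below -/
import Mathlib

section
/- Let X be a complex Banach space and x, y ∈ X be nonzero. Then there exists a unimodular complex number β such that ‖x + tβy‖ ≥ ‖x‖ for all real t. -/
/-! By Hahn–Banach, a norming functional `f` for `x` (with `‖f‖ = 1`, `f x = ‖x‖`) satisfies
`‖x + t β y‖ ≥ re f (x + t β y) = ‖x‖ + t re (β f y)`, so it suffices to rotate `f y` onto the
imaginary axis by a unimodular `β`. -/

open Complex

theorem norm_le_norm_add_smul_of_re_apply_eq_zero {𝕜 E : Type*} [RCLike 𝕜]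
    [SeminormedAddCommGroup E] [NormedSpace 𝕜 E] {f : StrongDual 𝕜 E} (hf : ‖f‖ ≤ 1)
    {x z : E} (hfx : f x = ‖x‖) (hfz : RCLike.re (f z) = 0) (t : ℝ) :
    ‖x‖ ≤ ‖x + (t : 𝕜) • z‖ :=
  calc ‖x‖ = RCLike.re (f (x + (t : 𝕜) • z)) := by
        simp only [map_add, map_smul, smul_eq_mul, hfx, RCLike.ofReal_re,
          RCLike.re_ofReal_mul, hfz, mul_zero, add_zero]
    _ ≤ ‖f (x + (t : 𝕜) • z)‖ := RCLike.re_le_norm _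
    _ ≤ ‖f‖ * ‖x + (t : 𝕜) • z‖ := f.le_opNorm _
    _ ≤ ‖x + (t : 𝕜) • z‖ := mul_le_of_le_one_left (norm_nonneg _) hf

theorem Complex.exists_norm_eq_one_re_mul_eq_zero (c : ℂ) : ∃ β : ℂ, ‖β‖ = 1 ∧ (β * c).re = 0 := by
  refine ⟨exp ((Real.pi / 2 - c.arg : ℝ) * I), norm_exp_ofReal_mul_I _, ?_⟩
  have hβc : exp ((Real.pi / 2 - c.arg : ℝ) * I) * c = ‖c‖ * I := by
    nth_rw 2 [← norm_mul_exp_arg_mul_I c]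
    rw [mul_left_comm, ← exp_add, ← add_mul, ← ofReal_add, sub_add_cancel, ofReal_div,
      ofReal_ofNat, exp_pi_div_two_mul_I]
  rw [hβc, mul_re, I_re, I_im, ofReal_re, ofReal_im]
  ring

theorem exists_direction_of_orthogonality_general {X : Type*} [NormedAddCommGroup X]
    [NormedSpace ℂ X] (x y : X) (hx : x ≠ 0) :
    ∃ β : ℂ, ‖β‖ = 1 ∧ ∀ t : ℝ, ‖x + (t : ℂ) • β • y‖ ≥ ‖x‖ := by
  obtain ⟨f, hf, hfx⟩ := exists_dual_vector ℂ x (norm_ne_zero_iff.mpr hx)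
  obtain ⟨β, hβ, hβy⟩ := exists_norm_eq_one_re_mul_eq_zero (f y)
  refine ⟨β, hβ, norm_le_norm_add_smul_of_re_apply_eq_zero hf.le hfx ?_⟩
  rwa [map_smul, smul_eq_mul]

theorem exists_direction_of_orthogonality {X : Type*} [NormedAddCommGroup X]
    [NormedSpace ℂ X] [CompleteSpace X] (x y : X) (hx : x ≠ 0) (hy : y ≠ 0) :
    ∃ β : ℂ, ‖β‖ = 1 ∧ ∀ t : ℝ, ‖x + (t : ℂ) • β • y‖ ≥ ‖x‖ :=
  exists_direction_of_orthogonality_general x y hx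
end

section
/- Let X be a complex normed space, x ∈ X nonzero, λ ∈ ℂ nonzero, and γ unimodular. Then x ⊥_γ (λx) if and only if λγ is purely imaginary (i.e., Re(λγ) = 0). -/
theorem dir_orth_self_iff_purely_imaginary {X : Type*} [NormedAddCommGroup X]
    [NormedSpace ℂ X] (x : X) (hx : x ≠ 0) (lam γ : ℂ) (hlam : lam ≠ 0)
    (hγ : ‖γ‖ = 1) :
    (∀ t : ℝ, ‖x + (t : ℂ) • γ • (lam • x)‖ ≥ ‖x‖) ↔ (lam * γ).re = 0 := by
  have hxpos : 0 < ‖x‖ := norm_pos_iff.mpr hx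
  set μ : ℂ := lam * γ with hμdef
  have hμ : μ ≠ 0 := mul_ne_zero hlam (by intro h0; rw [h0] at hγ; simp at hγ)
  have hnsq : 0 < Complex.normSq μ := Complex.normSq_pos.mpr hμ
  have key : ∀ t : ℝ, ‖x + (t : ℂ) • γ • (lam • x)‖ = ‖1 + t * μ‖ * ‖x‖ := by
    intro t
    have h1 : x + (t : ℂ) • γ • (lam • x) = (1 + (t : ℂ) * μ) • x := by
      rw [smul_smul, smul_smul, add_smul, one_smul, hμdef]
      ring_nf
    rw [h1, norm_smul]
  have habs : ∀ t : ℝ, Complex.normSq (1 + (t : ℂ) * μ) =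
      1 + 2 * t * μ.re + t ^ 2 * Complex.normSq μ := by
    intro t
    simp [Complex.normSq_apply, Complex.add_re, Complex.add_im, Complex.mul_re,
      Complex.mul_im]
    ring
  constructor
  · intro h
    by_contra hre
    set t : ℝ := -μ.re / Complex.normSq μ with ht
    have h1 := h t
    rw [key t] at h1
    have h3 : (1 : ℝ) ≤ ‖1 + (t : ℂ) * μ‖ := by
      nlinarith
    have h4 : Complex.normSq (1 + (t : ℂ) * μ) = 1 - μ.re ^ 2 / Complex.normSq μ := by
      rw [habs, ht]; field_simp; ring
    have h5 : 0 < μ.re ^ 2 := by positivity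
    have h6 : μ.re ^ 2 / Complex.normSq μ > 0 := by positivity
    nlinarith [Complex.sq_norm (1 + (t : ℂ) * μ)]
  · intro hre t
    rw [key t]
    have h1 : (1 : ℝ) ≤ ‖1 + (t : ℂ) * μ‖ := by
      have := habs t
      rw [hre] at this
      nlinarith [Complex.sq_norm (1 + (t : ℂ) * μ), norm_nonneg (1 + (t : ℂ) * μ),
        sq_nonneg t, Complex.normSq_nonneg μ]
    nlinarith
end

section
/- Let X be a complex Banach space and x, y ∈ X. Suppose x ⊥_{β₀} y for some unimodular β₀, and there exists γ₀ in the closed half-circle U_{β₀} (those unimodular γ with argument in [arg β₀, π + arg β₀]) such that y ∈ (x)_{γ₀}^- but y ∉ (x)_{γ₀}^+. Then y ∈ (x)_γ^- for every γ ∈ U_{β₀}. -/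
/-- The half-circle determined by β: unimodular γ whose argument lies in
[arg β, π + arg β], encoded as γ = β · e^{iθ} with θ ∈ [0, π]. -/
theorem neg_part_along_half_circle {X : Type*} [NormedAddCommGroup X]
    [NormedSpace ℂ X] [CompleteSpace X] (x y : X) (β₀ : ℂ) (hβ₀ : ‖β₀‖ = 1)
    (horth : ∀ t : ℝ, ‖x + (t : ℂ) • β₀ • y‖ ≥ ‖x‖)
    (γ₀ : ℂ) (hγ₀ : ∃ θ : ℝ, θ ∈ Set.Icc (0 : ℝ) Real.pi ∧ γ₀ = β₀ * Complex.exp (θ * Complex.I))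
    (hneg : ∀ t : ℝ, t ≤ 0 → ‖x + (t : ℂ) • γ₀ • y‖ ≥ ‖x‖)
    (hnotpos : ¬ ∀ t : ℝ, 0 ≤ t → ‖x + (t : ℂ) • γ₀ • y‖ ≥ ‖x‖) :
    ∀ γ : ℂ, (∃ θ : ℝ, θ ∈ Set.Icc (0 : ℝ) Real.pi ∧ γ = β₀ * Complex.exp (θ * Complex.I)) →
      ∀ t : ℝ, t ≤ 0 → ‖x + (t : ℂ) • γ • y‖ ≥ ‖x‖ := by
  have hβ₀ne : β₀ ≠ 0 := by
    intro h; rw [h, norm_zero] at hβ₀; norm_num at hβ₀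
  -- Lemma A: points on the real axis (in β₀-coordinates) have norm ≥ ‖x‖.
  have lemA : ∀ z : ℂ, (z / β₀).im = 0 → ‖x + z • y‖ ≥ ‖x‖ := by
    intro z hz
    have h1 : z / β₀ = (((z / β₀).re : ℝ) : ℂ) := by
      apply Complex.ext
      · simp
      · simp [hz]
    have h2 : z = (((z / β₀).re : ℝ) : ℂ) * β₀ := by
      rw [← h1, div_mul_cancel₀ z hβ₀ne]
    rw [h2]
    have := horth (z / β₀).re
    rwa [smul_smul] at this
  -- Lemma B: a bad point in the open upper half-plane forces all lower half-plane
  -- points to be good, by convexity.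
  have lemB : ∀ a b : ℂ, ‖x + a • y‖ < ‖x‖ → 0 < (a / β₀).im → (b / β₀).im < 0 →
      ‖x + b • y‖ ≥ ‖x‖ := by
    intro a b ha hua hub
    by_contra hb
    push_neg at hb
    set ua := (a / β₀).im with hua'
    set ub := (b / β₀).im with hub'
    have hden : ub - ua < 0 := by linarith
    set l : ℝ := ub / (ub - ua) with hl
    have hl0 : 0 < l := div_pos_of_neg_of_neg hub hden
    have hl1 : l < 1 := by
      rw [hl, div_lt_one_of_neg hden]
      linarith
    set m : ℂ := (l : ℂ) * a + ((1 - l : ℝ) : ℂ) * b with hm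
    have him : (m / β₀).im = 0 := by
      have hmd : m / β₀ = (l : ℂ) * (a / β₀) + ((1 - l : ℝ) : ℂ) * (b / β₀) := by
        rw [hm]; ring
      rw [hmd]
      simp only [Complex.add_im, Complex.mul_im, Complex.ofReal_re, Complex.ofReal_im,
        zero_mul, add_zero, ← hua', ← hub']
      have hne : ub - ua ≠ 0 := ne_of_lt hden
      rw [hl]
      field_simp
      ring
    have hcomb : x + m • y = (l : ℂ) • (x + a • y) + ((1 - l : ℝ) : ℂ) • (x + b • y) := by
      rw [hm]
      push_cast
      module
    have h1 := lemA m him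
    rw [hcomb] at h1
    have h2 : ‖(l : ℂ) • (x + a • y) + ((1 - l : ℝ) : ℂ) • (x + b • y)‖
        ≤ l * ‖x + a • y‖ + (1 - l) * ‖x + b • y‖ := by
      calc ‖(l : ℂ) • (x + a • y) + ((1 - l : ℝ) : ℂ) • (x + b • y)‖
          ≤ ‖(l : ℂ) • (x + a • y)‖ + ‖((1 - l : ℝ) : ℂ) • (x + b • y)‖ := norm_add_le _ _
        _ = l * ‖x + a • y‖ + (1 - l) * ‖x + b • y‖ := by
            rw [norm_smul, norm_smul, Complex.norm_real, Complex.norm_real,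
              Real.norm_eq_abs, Real.norm_eq_abs, abs_of_pos hl0, abs_of_pos (by linarith)]
    nlinarith [h1, h2, ha, hb, hl0, hl1]
  -- extract the bad point from hnotpos
  push_neg at hnotpos
  obtain ⟨t₁, ht₁0, ht₁⟩ := hnotpos
  obtain ⟨θ₀, ⟨hθ₀0, hθ₀π⟩, hγ₀eq⟩ := hγ₀
  rw [smul_smul] at ht₁
  set a : ℂ := (t₁ : ℂ) * γ₀ with haeq
  have hua : (a / β₀).im = t₁ * Real.sin θ₀ := by
    have hd : a / β₀ = (t₁ : ℂ) * Complex.exp ((θ₀ : ℂ) * Complex.I) := by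
      rw [haeq, hγ₀eq]; field_simp
    rw [hd, Complex.exp_mul_I]
    simp [Complex.mul_im, Complex.add_im, Complex.add_re, Complex.sin_ofReal_re]
  have hsin₀ : 0 ≤ Real.sin θ₀ := Real.sin_nonneg_of_nonneg_of_le_pi hθ₀0 hθ₀π
  have huapos : 0 < (a / β₀).im := by
    rw [hua]
    rcases (mul_nonneg ht₁0 hsin₀).lt_or_eq with h | h
    · exact h
    · exfalso
      have := lemA a (by rw [hua, ← h])
      linarith
  rintro γ ⟨θ, ⟨hθ0, hθπ⟩, hγeq⟩ t ht
  rw [smul_smul]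
  set b : ℂ := (t : ℂ) * γ with hbeq
  have hub : (b / β₀).im = t * Real.sin θ := by
    have hd : b / β₀ = (t : ℂ) * Complex.exp ((θ : ℂ) * Complex.I) := by
      rw [hbeq, hγeq]; field_simp
    rw [hd, Complex.exp_mul_I]
    simp [Complex.mul_im, Complex.add_im, Complex.add_re, Complex.sin_ofReal_re]
  have hsin : 0 ≤ Real.sin θ := Real.sin_nonneg_of_nonneg_of_le_pi hθ0 hθπ
  rcases (mul_nonpos_of_nonpos_of_nonneg ht hsin).lt_or_eq with h | h
  · exact lemB a b ht₁ huapos (by rw [hub]; exact h)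
  · exact lemA b (by rw [hub, h])
end

section
/- Let X be a complex Banach space and x, y ∈ X nonzero with x not Birkhoff-James orthogonal to y. Then the set S := {γ ∈ ℂ : |γ| = 1 and x ⊥_γ y} can be written as E ∪ (−E), where E is a closed connected subset (closed arc) of the unit circle. -/
open Complex Set

private lemma sin_exp_identity (a b θ : ℝ) :
    (Real.sin (b - θ) : ℂ) * Complex.exp (a * Complex.I)
      + (Real.sin (θ - a) : ℂ) * Complex.exp (b * Complex.I)
      = (Real.sin (b - a) : ℂ) * Complex.exp (θ * Complex.I) := by
  simp only [Complex.ofReal_sin, Complex.sin, Complex.ofReal_sub, sub_mul, neg_sub,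
    Complex.exp_sub]
  field_simp [Complex.exp_ne_zero]
  ring

set_option maxHeartbeats 1600000

theorem directions_of_orthogonality_union_of_arcs {X : Type*} [NormedAddCommGroup X]
    [NormedSpace ℂ X] [CompleteSpace X] (x y : X) (hx : x ≠ 0) (hy : y ≠ 0)
    (hB : ¬ ∀ lam : ℂ, ‖x + lam • y‖ ≥ ‖x‖) :
    ∃ E : Set ℂ, IsClosed E ∧ IsConnected E ∧ E ⊆ Metric.sphere (0 : ℂ) 1 ∧
      {γ : ℂ | ‖γ‖ = 1 ∧ ∀ t : ℝ, ‖x + (t : ℂ) • γ • y‖ ≥ ‖x‖} = E ∪ (-E) := by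
  push_neg at hB
  obtain ⟨lam, hlam⟩ := hB
  set A : Set ℂ := {γ : ℂ | ∃ t : ℝ, 0 < t ∧ ‖x + ((t : ℂ) * γ) • y‖ < ‖x‖} with hAdef
  -- basic facts about A
  have hAopen : IsOpen A := by
    have : A = ⋃ t : ℝ, ⋃ _ : 0 < t, {γ : ℂ | ‖x + ((t : ℂ) * γ) • y‖ < ‖x‖} := by
      ext γ; simp [hAdef]
    rw [this]
    refine isOpen_iUnion fun t => isOpen_iUnion fun ht => ?_
    exact isOpen_lt (by fun_prop) continuous_const
  have hA0 : (0 : ℂ) ∉ A := by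
    rintro ⟨t, ht, h⟩
    simp at h
  have hcone : ∀ c : ℝ, 0 < c → ∀ v ∈ A, (c : ℂ) * v ∈ A := by
    rintro c hc v ⟨t, ht, h⟩
    refine ⟨t / c, div_pos ht hc, ?_⟩
    have hcne : (c : ℂ) ≠ 0 := by exact_mod_cast hc.ne'
    have : ((t / c : ℝ) : ℂ) * ((c : ℂ) * v) = (t : ℂ) * v := by
      push_cast
      field_simp
    rwa [this]
  have hcomb : ∀ c₁ c₂ : ℝ, 0 < c₁ → 0 < c₂ → ∀ v ∈ A, ∀ w ∈ A,
      (c₁ : ℂ) * v + (c₂ : ℂ) * w ∈ A := by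
    rintro c₁ c₂ hc₁ hc₂ v ⟨t₁, ht₁, h₁⟩ w ⟨t₂, ht₂, h₂⟩
    set s : ℝ := (c₁ / t₁ + c₂ / t₂)⁻¹ with hs
    have hden : 0 < c₁ / t₁ + c₂ / t₂ := by positivity
    have hspos : 0 < s := by positivity
    set θ : ℝ := s * (c₁ / t₁) with hθ
    have hθpos : 0 < θ := by positivity
    have hθlt : θ < 1 := by
      rw [hθ, hs]
      rw [inv_mul_lt_iff₀ hden]
      nlinarith [div_pos hc₂ ht₂]
    have hθ2 : 1 - θ = s * (c₂ / t₂) := by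
      rw [hθ, hs]
      field_simp
      ring
    have e1 : (θ : ℂ) * (t₁ : ℂ) = (s : ℂ) * (c₁ : ℂ) := by
      have : θ * t₁ = s * c₁ := by rw [hθ]; field_simp
      exact_mod_cast congrArg (Complex.ofReal ·) this
    have e2 : (((1 - θ : ℝ)) : ℂ) * (t₂ : ℂ) = (s : ℂ) * (c₂ : ℂ) := by
      have : (1 - θ) * t₂ = s * c₂ := by rw [hθ2]; field_simp
      exact_mod_cast congrArg (Complex.ofReal ·) this
    have e3 : (θ : ℂ) + (((1 - θ : ℝ)) : ℂ) = 1 := by push_cast; ring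
    have e4 : (θ : ℂ) * ((t₁ : ℂ) * v) + (((1 - θ : ℝ)) : ℂ) * ((t₂ : ℂ) * w)
        = (s : ℂ) * ((c₁ : ℂ) * v + (c₂ : ℂ) * w) := by
      linear_combination v * e1 + w * e2
    have key : x + ((s : ℂ) * ((c₁ : ℂ) * v + (c₂ : ℂ) * w)) • y
        = (θ : ℂ) • (x + ((t₁ : ℂ) * v) • y) + (((1 - θ : ℝ)) : ℂ) • (x + ((t₂ : ℂ) * w) • y) := by
      calc x + ((s : ℂ) * ((c₁ : ℂ) * v + (c₂ : ℂ) * w)) • y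
          = ((θ : ℂ) + (((1 - θ : ℝ)) : ℂ)) • x
            + ((θ : ℂ) * ((t₁ : ℂ) * v) + (((1 - θ : ℝ)) : ℂ) * ((t₂ : ℂ) * w)) • y := by
            rw [e3, e4, one_smul]
        _ = (θ : ℂ) • (x + ((t₁ : ℂ) * v) • y) + (((1 - θ : ℝ)) : ℂ) • (x + ((t₂ : ℂ) * w) • y) := by
            rw [smul_add, smul_add, smul_smul, smul_smul, add_smul, add_smul]
            abel
    refine ⟨s, hspos, ?_⟩
    rw [key]
    calc ‖(θ : ℂ) • (x + ((t₁ : ℂ) * v) • y) + (((1 - θ : ℝ)) : ℂ) • (x + ((t₂ : ℂ) * w) • y)‖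
        ≤ ‖(θ : ℂ) • (x + ((t₁ : ℂ) * v) • y)‖ + ‖(((1 - θ : ℝ)) : ℂ) • (x + ((t₂ : ℂ) * w) • y)‖ :=
          norm_add_le _ _
      _ = θ * ‖x + ((t₁ : ℂ) * v) • y‖ + (1 - θ) * ‖x + ((t₂ : ℂ) * w) • y‖ := by
          rw [norm_smul, norm_smul, Complex.norm_real, Complex.norm_real, Real.norm_eq_abs,
            Real.norm_eq_abs, abs_of_pos hθpos, abs_of_pos (by linarith : (0:ℝ) < 1 - θ)]
      _ < θ * ‖x‖ + (1 - θ) * ‖x‖ := by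
          have := mul_lt_mul_of_pos_left h₁ hθpos
          have := mul_lt_mul_of_pos_left h₂ (by linarith : (0:ℝ) < 1 - θ)
          linarith
      _ = ‖x‖ := by ring
  have hanti : ∀ v ∈ A, -v ∉ A := by
    rintro v ⟨t₁, ht₁, h₁⟩ ⟨t₂, ht₂, h₂⟩
    have hsum : 0 < t₁ + t₂ := by linarith
    set θ : ℝ := t₂ / (t₁ + t₂) with hθ
    have hθpos : 0 < θ := by positivity
    have hθlt : θ < 1 := by rw [hθ, div_lt_one hsum]; linarith
    have e1 : (θ : ℂ) * (t₁ : ℂ) + (((1 - θ : ℝ)) : ℂ) * (t₂ : ℂ) * (-1) = 0 := by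
      have h : θ * t₁ + (1 - θ) * t₂ * (-1) = 0 := by rw [hθ]; field_simp; ring
      exact_mod_cast congrArg (Complex.ofReal ·) h
    have e3 : (θ : ℂ) + (((1 - θ : ℝ)) : ℂ) = 1 := by push_cast; ring
    have key : (θ : ℂ) • (x + ((t₁ : ℂ) * v) • y)
        + (((1 - θ : ℝ)) : ℂ) • (x + ((t₂ : ℂ) * (-v)) • y) = x := by
      have e4 : (θ : ℂ) * ((t₁ : ℂ) * v) + (((1 - θ : ℝ)) : ℂ) * ((t₂ : ℂ) * (-v)) = 0 := by
        linear_combination v * e1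
      calc (θ : ℂ) • (x + ((t₁ : ℂ) * v) • y) + (((1 - θ : ℝ)) : ℂ) • (x + ((t₂ : ℂ) * (-v)) • y)
          = ((θ : ℂ) + (((1 - θ : ℝ)) : ℂ)) • x
            + ((θ : ℂ) * ((t₁ : ℂ) * v) + (((1 - θ : ℝ)) : ℂ) * ((t₂ : ℂ) * (-v))) • y := by
            rw [smul_add, smul_add, smul_smul, smul_smul, add_smul, add_smul]
            abel
        _ = x := by rw [e3, e4, one_smul, zero_smul, add_zero]
    have : ‖x‖ < ‖x‖ := by
      conv_lhs => rw [← key]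
      calc ‖(θ : ℂ) • (x + ((t₁ : ℂ) * v) • y) + (((1 - θ : ℝ)) : ℂ) • (x + ((t₂ : ℂ) * (-v)) • y)‖
          ≤ ‖(θ : ℂ) • (x + ((t₁ : ℂ) * v) • y)‖
            + ‖(((1 - θ : ℝ)) : ℂ) • (x + ((t₂ : ℂ) * (-v)) • y)‖ := norm_add_le _ _
        _ = θ * ‖x + ((t₁ : ℂ) * v) • y‖ + (1 - θ) * ‖x + ((t₂ : ℂ) * (-v)) • y‖ := by
            rw [norm_smul, norm_smul, Complex.norm_real, Complex.norm_real, Real.norm_eq_abs,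
              Real.norm_eq_abs, abs_of_pos hθpos, abs_of_pos (by linarith : (0:ℝ) < 1 - θ)]
        _ < θ * ‖x‖ + (1 - θ) * ‖x‖ := by
            have := mul_lt_mul_of_pos_left h₁ hθpos
            have := mul_lt_mul_of_pos_left h₂ (by linarith : (0:ℝ) < 1 - θ)
            linarith
        _ = ‖x‖ := by ring
    exact lt_irrefl _ this
  -- membership characterization
  have hS : ∀ γ : ℂ, (∀ t : ℝ, ‖x + (t : ℂ) • γ • y‖ ≥ ‖x‖) ↔ (γ ∉ A ∧ -γ ∉ A) := by
    intro γ
    constructor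
    · intro h
      constructor
      · rintro ⟨t, ht, hlt⟩
        have := h t
        rw [smul_smul] at this
        exact absurd hlt (not_lt.2 this)
      · rintro ⟨t, ht, hlt⟩
        have := h (-t)
        rw [smul_smul] at this
        have e : ((-t : ℝ) : ℂ) * γ = (t : ℂ) * (-γ) := by push_cast; ring
        rw [e] at this
        exact absurd hlt (not_lt.2 this)
    · rintro ⟨h1, h2⟩ t
      rw [smul_smul]
      rcases lt_trichotomy t 0 with ht | ht | ht
      · by_contra hcon
        push_neg at hcon
        refine h2 ⟨-t, by linarith, ?_⟩
        have e : ((-t : ℝ) : ℂ) * (-γ) = (t : ℂ) * γ := by push_cast; ring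
        rwa [e]
      · simp [ht]
      · by_contra hcon
        push_neg at hcon
        exact h1 ⟨t, ht, hcon⟩
  -- the base point
  have hlam0 : lam ≠ 0 := by
    rintro rfl
    simp at hlam
  have hlamA : lam ∈ A := ⟨1, one_pos, by simpa using hlam⟩
  set γ₀ : ℂ := ((‖lam‖⁻¹ : ℝ) : ℂ) * lam with hγ₀def
  have hγ₀A : γ₀ ∈ A := hcone _ (inv_pos.2 (norm_pos_iff.2 hlam0)) _ hlamA
  have hγ₀norm : ‖γ₀‖ = 1 := by
    rw [hγ₀def, norm_mul, Complex.norm_real, Real.norm_eq_abs,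
      abs_of_pos (inv_pos.2 (norm_pos_iff.2 hlam0))]
    exact inv_mul_cancel₀ (norm_ne_zero_iff.2 hlam0)
  have hγ₀ne : γ₀ ≠ 0 := by
    intro h; rw [h] at hγ₀norm; simp at hγ₀norm
  -- the parametrization
  set p : ℝ → ℂ := fun θ => Complex.exp ((θ : ℂ) * Complex.I) * γ₀ with hpdef
  have hpcont : Continuous p := by fun_prop
  have hpnorm : ∀ θ, ‖p θ‖ = 1 := by
    intro θ
    simp only [hpdef]
    rw [norm_mul, Complex.norm_exp_ofReal_mul_I, one_mul, hγ₀norm]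
  have hppi : ∀ θ, p (θ + Real.pi) = -p θ := by
    intro θ
    simp only [hpdef]
    push_cast
    rw [add_mul, Complex.exp_add, Complex.exp_pi_mul_I]
    ring
  have hpper : ∀ (θ : ℝ) (k : ℤ), p (θ - 2 * Real.pi * k) = p θ := by
    intro θ k
    simp only [hpdef]
    push_cast
    rw [sub_mul, Complex.exp_sub]
    rw [show ((2:ℂ) * (Real.pi:ℂ) * (k:ℂ) * Complex.I) = (k : ℂ) * (2 * (Real.pi:ℂ) * Complex.I) by
      ring, Complex.exp_int_mul_two_pi_mul_I]
    simp
  -- the angle set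
  set Θ : Set ℝ := {θ : ℝ | p θ ∈ A} with hΘdef
  have hΘopen : IsOpen Θ := hAopen.preimage hpcont
  have hΘ0 : (0 : ℝ) ∈ Θ := by
    show p 0 ∈ A
    simp only [hpdef]
    simpa using hγ₀A
  have hΘanti : ∀ θ ∈ Θ, θ + Real.pi ∉ Θ := by
    intro θ hθ h
    have h2 : p (θ + Real.pi) ∈ A := h
    rw [hppi] at h2
    exact hanti _ hθ h2
  have pi_pos := Real.pi_pos
  -- short arc convexity
  have hshort : ∀ θ₁ θ₂ : ℝ, θ₁ ∈ Θ → θ₂ ∈ Θ → θ₁ < θ₂ → θ₂ - θ₁ < Real.pi →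
      Icc θ₁ θ₂ ⊆ Θ := by
    intro θ₁ θ₂ h₁ h₂ hlt hpi θ hθ
    rcases eq_or_lt_of_le hθ.1 with rfl | hθ1
    · exact h₁
    rcases eq_or_lt_of_le hθ.2 with rfl | hθ2
    · exact h₂
    have hsin : 0 < Real.sin (θ₂ - θ₁) := by
      apply Real.sin_pos_of_pos_of_lt_pi <;> linarith
    have hsin1 : 0 < Real.sin (θ₂ - θ) := by
      apply Real.sin_pos_of_pos_of_lt_pi <;> linarith
    have hsin2 : 0 < Real.sin (θ - θ₁) := by
      apply Real.sin_pos_of_pos_of_lt_pi <;> linarith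
    have hid : ((Real.sin (θ₂ - θ) / Real.sin (θ₂ - θ₁) : ℝ) : ℂ) * p θ₁
        + ((Real.sin (θ - θ₁) / Real.sin (θ₂ - θ₁) : ℝ) : ℂ) * p θ₂ = p θ := by
      simp only [hpdef]
      have hident := sin_exp_identity θ₁ θ₂ θ
      have hsinne : ((Real.sin (θ₂ - θ₁) : ℝ) : ℂ) ≠ 0 := by
        exact_mod_cast hsin.ne'
      rw [Complex.ofReal_div, Complex.ofReal_div, div_mul_eq_mul_div, div_mul_eq_mul_div,
        ← add_div, div_eq_iff hsinne]
      linear_combination γ₀ * hident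
    have hmem := hcomb _ _ (div_pos hsin1 hsin) (div_pos hsin2 hsin) _ h₁ _ h₂
    show p θ ∈ A
    rw [← hid]
    exact hmem
  -- sup and inf
  set Sb : Set ℝ := Θ ∩ Icc 0 Real.pi with hSbdef
  set Sa : Set ℝ := Θ ∩ Icc (-Real.pi) 0 with hSadef
  have hSbne : Sb.Nonempty := ⟨0, hΘ0, by constructor <;> linarith⟩
  have hSane : Sa.Nonempty := ⟨0, hΘ0, by constructor <;> linarith⟩
  have hSbbd : BddAbove Sb := ⟨Real.pi, fun z hz => hz.2.2⟩
  have hSabd : BddBelow Sa := ⟨-Real.pi, fun z hz => hz.2.1⟩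
  set b : ℝ := sSup Sb with hbdef
  set a : ℝ := sInf Sa with hadef
  have hb_le_pi : b ≤ Real.pi := csSup_le hSbne fun z hz => hz.2.2
  have ha_ge : -Real.pi ≤ a := le_csInf hSane fun z hz => hz.2.1
  have hb_nonneg : 0 ≤ b := le_csSup hSbbd ⟨hΘ0, by constructor <;> linarith⟩
  have ha_nonpos : a ≤ 0 := csInf_le hSabd ⟨hΘ0, by constructor <;> linarith⟩
  -- openness at 0 gives strict positivity
  have hball : ∃ ε : ℝ, 0 < ε ∧ ε < Real.pi ∧ Icc (-ε) ε ⊆ Θ := by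
    obtain ⟨δ, hδ0, hδ⟩ := Metric.isOpen_iff.1 hΘopen 0 hΘ0
    have h1 := min_le_left (δ / 2) (Real.pi / 2)
    have h2 := min_le_right (δ / 2) (Real.pi / 2)
    refine ⟨min (δ / 2) (Real.pi / 2), lt_min (by linarith) (by linarith), by linarith,
      fun z hz => hδ ?_⟩
    simp only [Metric.mem_ball, Real.dist_eq, sub_zero]
    have habs : |z| ≤ min (δ / 2) (Real.pi / 2) := abs_le.2 ⟨hz.1, hz.2⟩
    linarith
  obtain ⟨ε, hε0, hεπ, hεΘ⟩ := hball
  have hb_pos : 0 < b := by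
    have hmem : ε ∈ Sb := ⟨hεΘ (Set.mem_Icc.2 ⟨by linarith, le_rfl⟩), by constructor <;> linarith⟩
    have := le_csSup hSbbd hmem
    linarith
  have ha_neg : a < 0 := by
    have hmem : -ε ∈ Sa := ⟨hεΘ (Set.mem_Icc.2 ⟨le_rfl, by linarith⟩), by constructor <;> linarith⟩
    have := csInf_le hSabd hmem
    linarith
  have hpi_notΘ : Real.pi ∉ Θ := by
    have := hΘanti 0 hΘ0
    simpa using this
  have hnegpi_notΘ : -Real.pi ∉ Θ := by
    intro h
    have := hΘanti _ h
    simp at this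
    exact this hΘ0
  -- intervals inside Θ
  have hIb : Ico 0 b ⊆ Θ := by
    intro θ hθ
    obtain ⟨θ', hθ'S, hθ'gt⟩ := exists_lt_of_lt_csSup hSbne hθ.2
    have hθ'pi : θ' < Real.pi := lt_of_le_of_ne hθ'S.2.2 (fun h => hpi_notΘ (h ▸ hθ'S.1))
    rcases eq_or_lt_of_le hθ.1 with rfl | hθ0
    · exact hΘ0
    · exact hshort 0 θ' hΘ0 hθ'S.1 (by linarith) (by linarith) ⟨by linarith, by linarith⟩
  have hIa : Ioc a 0 ⊆ Θ := by
    intro θ hθ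
    obtain ⟨θ', hθ'S, hθ'lt⟩ := exists_lt_of_csInf_lt hSane hθ.1
    have hθ'pi : -Real.pi < θ' :=
      lt_of_le_of_ne hθ'S.2.1 (fun h => hnegpi_notΘ (by rw [h]; exact hθ'S.1))
    rcases eq_or_lt_of_le hθ.2 with h0 | hθ0
    · rw [h0]; exact hΘ0
    · exact hshort θ' 0 hθ'S.1 hΘ0 (by linarith) (by linarith) ⟨by linarith, by linarith⟩
  -- b - a ≤ π
  have hba : b - a ≤ Real.pi := by
    by_contra hcon
    push_neg at hcon
    have hmax : max (a + Real.pi) 0 < b := by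
      rcases max_cases (a + Real.pi) 0 with ⟨h, _⟩ | ⟨h, _⟩ <;> rw [h] <;> linarith
    obtain ⟨θ, h3, h1⟩ : ∃ θ : ℝ, max (a + Real.pi) 0 < θ ∧ θ < b :=
      ⟨(max (a + Real.pi) 0 + b) / 2, by linarith, by linarith⟩
    have h2 : 0 ≤ θ := le_trans (le_max_right _ _) h3.le
    have h3' : a + Real.pi < θ := lt_of_le_of_lt (le_max_left _ _) h3
    have hθΘ : θ ∈ Θ := hIb ⟨h2, h1⟩
    have hθπΘ : θ - Real.pi ∈ Θ := hIa ⟨by linarith, by linarith⟩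
    exact hΘanti _ hθπΘ (by simpa using hθΘ)
  have hb_lt_pi : b < Real.pi := by linarith
  have ha_gt : -Real.pi < a := by linarith
  have hb_notΘ : b ∉ Θ := by
    intro hbΘ
    obtain ⟨δ, hδ0, hδ⟩ := Metric.isOpen_iff.1 hΘopen b hbΘ
    set m : ℝ := min (δ / 2) ((Real.pi - b) / 2) with hm
    have hm0 : 0 < m := lt_min (by linarith) (by linarith)
    have hmδ : m < δ := lt_of_le_of_lt (min_le_left _ _) (by linarith)
    have hθΘ : b + m ∈ Θ := hδ (by
      simp only [Metric.mem_ball, Real.dist_eq, add_sub_cancel_left]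
      rw [abs_of_pos hm0]
      exact hmδ)
    have hmπ : b + m ≤ Real.pi := by
      have := min_le_right (δ / 2) ((Real.pi - b) / 2)
      linarith
    have hmem : b + m ∈ Sb := ⟨hθΘ, by constructor <;> linarith⟩
    have := le_csSup hSbbd hmem
    linarith
  have ha_notΘ : a ∉ Θ := by
    intro haΘ
    obtain ⟨δ, hδ0, hδ⟩ := Metric.isOpen_iff.1 hΘopen a haΘ
    set m : ℝ := min (δ / 2) ((a + Real.pi) / 2) with hm
    have hm0 : 0 < m := lt_min (by linarith) (by linarith)
    have hmδ : m < δ := lt_of_le_of_lt (min_le_left _ _) (by linarith)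
    have hθΘ : a - m ∈ Θ := hδ (by
      simp only [Metric.mem_ball, Real.dist_eq, sub_sub_cancel_left, abs_neg]
      rw [abs_of_pos hm0]
      exact hmδ)
    have hmπ : -Real.pi ≤ a - m := by
      have := min_le_right (δ / 2) ((a + Real.pi) / 2)
      linarith
    have hmem : a - m ∈ Sa := ⟨hθΘ, by constructor <;> linarith⟩
    have := csInf_le hSabd hmem
    linarith
  -- characterization on the fundamental interval
  have hΘIoc : ∀ θ ∈ Ioc (-Real.pi) Real.pi, (θ ∈ Θ ↔ a < θ ∧ θ < b) := by
    intro θ hθ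
    constructor
    · intro hθΘ
      rcases le_or_gt 0 θ with h0 | h0
      · have hmem : θ ∈ Sb := ⟨hθΘ, h0, hθ.2⟩
        have hle := le_csSup hSbbd hmem
        have hne : θ ≠ b := fun h => hb_notΘ (h ▸ hθΘ)
        exact ⟨by linarith, lt_of_le_of_ne hle hne⟩
      · have hmem : θ ∈ Sa := ⟨hθΘ, le_of_lt hθ.1, le_of_lt h0⟩
        have hle := csInf_le hSabd hmem
        have hne : a ≠ θ := fun h => ha_notΘ (h ▸ hθΘ)
        exact ⟨lt_of_le_of_ne hle hne, by linarith⟩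
    · rintro ⟨h1, h2⟩
      rcases le_or_gt 0 θ with h0 | h0
      · exact hIb ⟨h0, h2⟩
      · exact hIa ⟨h1, le_of_lt h0⟩
  have two_pi_pos : (0 : ℝ) < 2 * Real.pi := by linarith
  -- global characterization
  have hΘchar : ∀ θ : ℝ, θ ∈ Θ ↔
      ∃ k : ℤ, a < θ - 2 * Real.pi * k ∧ θ - 2 * Real.pi * k < b := by
    intro θ
    constructor
    · intro hθΘ
      set k : ℤ := toIocDiv two_pi_pos (-Real.pi) θ with hk
      set T : ℝ := toIocMod two_pi_pos (-Real.pi) θ with hT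
      have hTmem := toIocMod_mem_Ioc two_pi_pos (-Real.pi) θ
      have hTk : θ - T = 2 * Real.pi * (k : ℝ) := by
        have h := self_sub_toIocMod two_pi_pos (-Real.pi) θ
        rw [zsmul_eq_mul] at h
        rw [← hT, ← hk] at h
        linarith
      have hTeq : T = θ - 2 * Real.pi * (k : ℝ) := by linarith
      have hTΘ : T ∈ Θ := by
        show p T ∈ A
        rw [hTeq, hpper]
        exact hθΘ
      have hmem : T ∈ Ioc (-Real.pi) Real.pi := ⟨hTmem.1, by
        have := hTmem.2; linarith⟩
      have := (hΘIoc T hmem).1 hTΘ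
      exact ⟨k, by rw [← hTeq]; exact this.1, by rw [← hTeq]; exact this.2⟩
    · rintro ⟨k, hk1, hk2⟩
      have hmem : θ - 2 * Real.pi * (k : ℝ) ∈ Ioc (-Real.pi) Real.pi :=
        ⟨by linarith, by linarith⟩
      have hΘ' := (hΘIoc _ hmem).2 ⟨hk1, hk2⟩
      show p θ ∈ A
      rw [← hpper θ k]
      exact hΘ'
  -- the arc
  have hbale : b ≤ a + Real.pi := by linarith
  refine ⟨p '' Icc b (a + Real.pi), (isCompact_Icc.image hpcont).isClosed,
    (isConnected_Icc hbale).image p hpcont.continuousOn, ?_, ?_⟩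
  · rintro _ ⟨θ, _, rfl⟩
    rw [mem_sphere_zero_iff_norm]
    exact hpnorm θ
  · -- main set equality
    have main : ∀ θ ∈ Icc b (a + Real.pi), p θ ∉ A ∧ p (θ + Real.pi) ∉ A := by
      intro θ hθ
      constructor
      · intro hA'
        obtain ⟨k, hk1, hk2⟩ := (hΘchar θ).1 hA'
        have hkr : (1 : ℝ) ≤ (k : ℝ) := by
          have h0 : (0 : ℝ) < (k : ℝ) := by
            by_contra hcon2
            push_neg at hcon2
            have : 2 * Real.pi * (k : ℝ) ≤ 0 := by nlinarith
            linarith [hθ.1]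
          have h1 : 0 < k := by exact_mod_cast h0
          exact_mod_cast h1
        nlinarith [hθ.2]
      · intro hA'
        obtain ⟨k, hk1, hk2⟩ := (hΘchar _).1 hA'
        have hkr : (1 : ℝ) ≤ (k : ℝ) := by
          have h0 : (0 : ℝ) < (k : ℝ) := by
            by_contra hcon2
            push_neg at hcon2
            have : 2 * Real.pi * (k : ℝ) ≤ 0 := by nlinarith
            linarith [hθ.1]
          have h1 : 0 < k := by exact_mod_cast h0
          exact_mod_cast h1
        have hkr2 : (k : ℝ) < 1 := by
          have h2 : 2 * Real.pi * (k : ℝ) < 2 * Real.pi := by linarith [hθ.2]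
          nlinarith
        linarith
    ext γ
    simp only [mem_setOf_eq, mem_union, Set.mem_neg, hS γ]
    constructor
    · rintro ⟨hnorm, hγ1, hγ2⟩
      have hwnorm : ‖γ / γ₀‖ = 1 := by
        rw [norm_div, hnorm, hγ₀norm]
        norm_num
      have hwexp : Complex.exp (((γ / γ₀).arg : ℂ) * Complex.I) = γ / γ₀ := by
        have h := Complex.norm_mul_exp_arg_mul_I (γ / γ₀)
        rwa [hwnorm, Complex.ofReal_one, one_mul] at h
      set ψ : ℝ := (γ / γ₀).arg with hψ
      have hγp : γ = p ψ := by
        simp only [hpdef]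
        rw [hwexp, div_mul_cancel₀ _ hγ₀ne]
      set k : ℤ := toIcoDiv two_pi_pos b ψ with hk
      set T : ℝ := toIcoMod two_pi_pos b ψ with hT
      have hTmem := toIcoMod_mem_Ico two_pi_pos b ψ
      have hTk : ψ - T = 2 * Real.pi * (k : ℝ) := by
        have h := self_sub_toIcoMod two_pi_pos b ψ
        rw [zsmul_eq_mul] at h
        rw [← hT, ← hk] at h
        linarith
      have hpT : p T = γ := by
        rw [hγp, show T = ψ - 2 * Real.pi * (k : ℝ) by linarith, hpper]
      have hpe : p (T - Real.pi) = -γ := by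
        have h := hppi (T - Real.pi)
        rw [sub_add_cancel, hpT] at h
        rw [← neg_eq_iff_eq_neg] at h
        rw [← h]
      rcases le_or_gt T (a + Real.pi) with hc1 | hc1
      · exact Or.inl ⟨T, ⟨hTmem.1, hc1⟩, hpT⟩
      rcases lt_or_ge T (b + Real.pi) with hc2 | hc2
      · exfalso
        have hTΘ : T - Real.pi ∈ Θ := (hΘchar _).2 ⟨0, by push_cast; constructor <;> linarith⟩
        have : p (T - Real.pi) ∈ A := hTΘ
        rw [hpe] at this
        exact hγ2 this
      rcases le_or_gt T (a + 2 * Real.pi) with hc3 | hc3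
      · exact Or.inr ⟨T - Real.pi, ⟨by linarith, by linarith⟩, hpe⟩
      · exfalso
        have hTΘ : T ∈ Θ := (hΘchar _).2 ⟨1, by push_cast; constructor <;> linarith [hTmem.2]⟩
        have : p T ∈ A := hTΘ
        rw [hpT] at this
        exact hγ1 this
    · rintro (⟨θ, hθmem, hpθ⟩ | ⟨θ, hθmem, hpθ⟩)
      · have hm := main θ hθmem
        refine ⟨by rw [← hpθ]; exact hpnorm θ, ?_, ?_⟩
        · rw [← hpθ]; exact hm.1
        · rw [← hpθ, ← hppi]; exact hm.2
      · have hm := main θ hθmem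
        have hγeq : γ = p (θ + Real.pi) := by rw [hppi, hpθ, neg_neg]
        refine ⟨by rw [hγeq]; exact hpnorm _, ?_, ?_⟩
        · rw [hγeq]; exact hm.2
        · rw [show -γ = p θ from hpθ.symm]; exact hm.1
end

section
/- Let X be a complex Banach space, x, y ∈ X nonzero vectors, and μ a unimodular complex number. Then x ⊥_μ y (i.e., ‖x + tμy‖ ≥ ‖x‖ for all real t) if and only if there exists a norm-one continuous linear functional u* on X with u*(x) = μ‖x‖ and Re u*(y) = 0. -/
open Metric

theorem dir_orth_iff_exists_functional {X : Type*} [NormedAddCommGroup X]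
    [NormedSpace ℂ X] [CompleteSpace X] (x y : X) (hx : x ≠ 0) (hy : y ≠ 0)
    (μ : ℂ) (hμ : ‖μ‖ = 1) :
    (∀ t : ℝ, ‖x + (t : ℂ) • μ • y‖ ≥ ‖x‖) ↔
      ∃ u : X →L[ℂ] ℂ, ‖u‖ = 1 ∧ u x = μ * ‖x‖ ∧ (u y).re = 0 := by
  constructor
  · intro h
    set z : X := μ • y with hz
    set S : Submodule ℝ X := Submodule.span ℝ {z} with hS
    haveI : IsClosed (S : Set X) := Submodule.closed_of_finiteDimensional S
    -- norm of mk x in quotient equals ‖x‖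
    have hinf : ‖x‖ ≤ infDist x (S : Set X) := by
      haveI : Nonempty (S : Set X) := ⟨⟨0, S.zero_mem⟩⟩
      rw [infDist_eq_iInf]
      refine le_ciInf ?_
      rintro ⟨m, hm⟩
      rcases Submodule.mem_span_singleton.mp hm with ⟨t, rfl⟩
      have := h (-t)
      calc ‖x‖ ≤ ‖x + ((-t : ℝ) : ℂ) • μ • y‖ := this
        _ = dist x (t • z) := by
            rw [dist_eq_norm]
            congr 1
            push_cast
            rw [hz, neg_smul, ← sub_eq_add_neg]
            congr 1
    have hnmk : ‖(Submodule.Quotient.mk x : X ⧸ S)‖ = ‖x‖ := by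
      refine le_antisymm (Submodule.Quotient.norm_mk_le S x) ?_
      rw [show ((Submodule.Quotient.mk x : X ⧸ S)) = ((x : X ⧸ S.toAddSubgroup)) from rfl,
        ]
      exact le_of_le_of_eq hinf (QuotientAddGroup.norm_mk (S := S.toAddSubgroup) x).symm
    have hmkne : (Submodule.Quotient.mk x : X ⧸ S) ≠ 0 := by
      intro h0
      apply hx
      rw [← norm_eq_zero, ← hnmk, h0, norm_zero]
    obtain ⟨φ, hφ1, hφx⟩ := exists_dual_vector ℝ (Submodule.Quotient.mk x : X ⧸ S) (norm_ne_zero_iff.mpr hmkne)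
    -- g : X →L[ℝ] ℝ
    have bound : ∀ v : X, ‖φ (Submodule.Quotient.mk v)‖ ≤ 1 * ‖v‖ := by
      intro v
      calc ‖φ (Submodule.Quotient.mk v)‖ ≤ ‖φ‖ * ‖(Submodule.Quotient.mk v : X ⧸ S)‖ :=
            φ.le_opNorm _
        _ ≤ 1 * ‖v‖ := by
            rw [hφ1]
            gcongr
            exact Submodule.Quotient.norm_mk_le S v
    obtain ⟨g, hgx, hgz, hgle⟩ :
        ∃ g : X →L[ℝ] ℝ, g x = ‖x‖ ∧ g z = 0 ∧ ‖g‖ ≤ 1 := by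
      refine ⟨LinearMap.mkContinuous (φ.toLinearMap.comp (S.mkQ)) 1 bound, ?_, ?_,
        LinearMap.mkContinuous_norm_le _ zero_le_one _⟩
      · show φ (Submodule.Quotient.mk x) = ‖x‖
        rw [hφx, hnmk]
        simp
      · show φ (Submodule.Quotient.mk z) = 0
        rw [(Submodule.Quotient.mk_eq_zero S).mpr (Submodule.mem_span_singleton_self z),
          map_zero]
    -- extend to complex functional
    obtain ⟨v, hvre, hvnorm⟩ :
        ∃ v : X →L[ℂ] ℂ, (∀ w : X, (v w).re = g w) ∧ ‖v‖ ≤ 1 := by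
      refine ⟨g.extendTo𝕜', fun w => ?_, ?_⟩
      · exact StrongDual.re_extendRCLike_apply (𝕜 := ℂ) g w
      · refine (StrongDual.norm_extendRCLike (𝕜 := ℂ) g).le.trans ?_; exact hgle
    have hvxle : ‖v x‖ ≤ ‖x‖ := by
      calc ‖v x‖ ≤ ‖v‖ * ‖x‖ := v.le_opNorm x
        _ ≤ 1 * ‖x‖ := by gcongr
        _ = ‖x‖ := one_mul _
    have hvx : v x = (‖x‖ : ℂ) := by
      have hre : (v x).re = ‖x‖ := by rw [hvre, hgx]
      have him : (v x).im = 0 := by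
        have h1 : ‖v x‖ ^ 2 = (v x).re ^ 2 + (v x).im ^ 2 := by
          rw [Complex.sq_norm, Complex.normSq_apply]; ring
        have h2 : ‖v x‖ ^ 2 ≤ ‖x‖ ^ 2 := by
          have := norm_nonneg (v x); nlinarith
        have hre2 : (v x).re ^ 2 = ‖x‖ ^ 2 := by rw [hre]
        have h3 : (v x).im ^ 2 = 0 := le_antisymm (by linarith) (sq_nonneg _)
        exact pow_eq_zero_iff two_ne_zero |>.mp h3
      apply Complex.ext
      · simpa using hre
      · simpa using him
    have hvnorm1 : ‖v‖ = 1 := by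
      refine le_antisymm hvnorm ?_
      have hxpos : (0:ℝ) < ‖x‖ := norm_pos_iff.mpr hx
      have hxx : ‖x‖ = ‖v x‖ := by rw [hvx]; simp [abs_of_nonneg (norm_nonneg x)]
      have hle := v.le_opNorm x
      rw [← hxx] at hle
      exact le_of_mul_le_mul_right (by linarith) hxpos
    refine ⟨μ • v, ?_, ?_, ?_⟩
    · rw [show ‖μ • v‖ = ‖μ‖ * ‖v‖ from norm_smul μ v, hμ, hvnorm1, one_mul]
    · simp only [ContinuousLinearMap.smul_apply, smul_eq_mul, hvx]
    · have hvy : (μ • v) y = v z := by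
        simp only [ContinuousLinearMap.smul_apply, smul_eq_mul, hz, map_smul, smul_eq_mul]
      rw [hvy, hvre, hgz]
  · rintro ⟨u, hu1, hux, huy⟩ t
    have key : ((starRingEnd ℂ) μ * u (x + (t : ℂ) • μ • y)).re = ‖x‖ := by
      have hμμ : (starRingEnd ℂ) μ * μ = 1 := by
        rw [mul_comm, Complex.mul_conj', hμ]
        norm_num
      have huval : u (x + (t : ℂ) • μ • y) = μ * (‖x‖ : ℂ) + (t : ℂ) * (μ * u y) := by
        rw [map_add, hux]
        congr 1
        rw [map_smul, map_smul]
        simp [smul_eq_mul]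
      rw [huval]
      have expand : (starRingEnd ℂ) μ * (μ * (‖x‖ : ℂ) + (t : ℂ) * (μ * u y))
          = (‖x‖ : ℂ) + (t : ℂ) * u y := by
        have h2 : μ * (starRingEnd ℂ) μ = 1 := by rw [mul_comm]; exact hμμ
        calc (starRingEnd ℂ) μ * (μ * (‖x‖ : ℂ) + (t : ℂ) * (μ * u y))
            = ((starRingEnd ℂ) μ * μ) * (‖x‖ : ℂ) + (t : ℂ) * (((starRingEnd ℂ) μ * μ) * u y) :=
              by ring
          _ = (‖x‖ : ℂ) + (t : ℂ) * u y := by rw [hμμ]; ring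
      rw [expand]
      simp [huy]
    have h1 : ‖x‖ ≤ ‖(starRingEnd ℂ) μ * u (x + (t : ℂ) • μ • y)‖ := by
      rw [← key]
      exact Complex.re_le_norm _
    rw [norm_mul, RingHomIsometric.norm_map, hμ, one_mul] at h1
    calc ‖x‖ ≤ ‖u (x + (t : ℂ) • μ • y)‖ := h1
      _ ≤ ‖u‖ * ‖x + (t : ℂ) • μ • y‖ := u.le_opNorm _
      _ = ‖x + (t : ℂ) • μ • y‖ := by rw [hu1, one_mul]
end

section
/- Let X be a complex Banach space and x ∈ X nonzero. Then x is a smooth point (i.e., there is a unique norm-one functional x* with x*(x) = ‖x‖) if and only if for every y ∈ X with x not Birkhoff-James orthogonal to y, the set of orthogonality pairs O(x,y) equals {(μ, u*), (−μ, −u*)} for some unimodular μ and some norm-one functional u*. -/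
/-!
If `J(x) = {u}`, every orthogonality pair for `(x, y)` has the form `(ν, ν • u)` with `|ν| = 1`
and `Re (ν * u y) = 0`. When `x` is not Birkhoff–James orthogonal to `y` we have `u y ≠ 0`, and
then `ν * u y = ± i |u y|` leaves exactly two choices `±ν`. Conversely, `x` is not orthogonal to
itself, and `(i, i • w) ∈ O(x, x)` for every `w ∈ J(x)`; since `{(μ, u), (-μ, -u)}` contains at
most one pair with first coordinate `i`, `J(x)` has at most one element, and Hahn–Banach gives one.
-/

open Complex

lemma Prod.eq_of_mem_pair_of_fst_eq {α β : Type*} {a a' : α} {b b' : β} (ha : a ≠ a')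
    {p q : α × β} (hp : p ∈ ({(a, b), (a', b')} : Set (α × β)))
    (hq : q ∈ ({(a, b), (a', b')} : Set (α × β))) (h : p.1 = q.1) : p = q := by
  rcases hp with rfl | rfl <;> rcases hq with rfl | rfl
  exacts [rfl, absurd h ha, absurd h.symm ha, rfl]

lemma Complex.eq_I_mul_norm_or_eq_neg_of_re_eq_zero {z : ℂ} (hz : z.re = 0) :
    z = I * ‖z‖ ∨ z = -(I * ‖z‖) := by
  have him : |z.im| = ‖z‖ := abs_im_eq_norm.2 hz
  have hz' : z = z.im * I := by simpa [hz] using (re_add_im z).symm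
  rcases abs_eq (norm_nonneg z) |>.1 him with h | h
  · left
    rw [← h, mul_comm]
    exact hz'
  · right
    calc z = z.im * I := hz'
      _ = -(I * ‖z‖) := by rw [h]; push_cast; ring

lemma Complex.setOf_norm_eq_one_and_re_mul_eq_zero {a : ℂ} (ha : a ≠ 0) :
    {ν : ℂ | ‖ν‖ = 1 ∧ (ν * a).re = 0} = {I * ‖a‖ / a, -(I * ‖a‖ / a)} := by
  ext ν
  simp only [Set.mem_ofPred_eq, Set.mem_insert_iff, Set.mem_singleton_iff]
  constructor
  · rintro ⟨hν, hre⟩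
    have hnorm : ‖ν * a‖ = ‖a‖ := by rw [norm_mul, hν, one_mul]
    rcases eq_I_mul_norm_or_eq_neg_of_re_eq_zero hre with h | h <;> rw [hnorm] at h
    · left; rw [eq_div_iff ha, h]
    · right; rw [← neg_div, eq_div_iff ha, h]
  · have hμ : I * ‖a‖ / a * a = I * ‖a‖ := div_mul_cancel₀ _ ha
    rintro (rfl | rfl) <;> simp [hμ, ha]

section

variable {X : Type*} [NormedAddCommGroup X] [NormedSpace ℂ X]

def BirkhoffOrthogonal (x y : X) : Prop := ∀ lam : ℂ, ‖x + lam • y‖ ≥ ‖x‖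

def supportingFunctionals (x : X) : Set (X →L[ℂ] ℂ) := {u | ‖u‖ = 1 ∧ u x = ‖x‖}

def orthogonalityPairs (x y : X) : Set (ℂ × (X →L[ℂ] ℂ)) :=
  {p | ‖p.1‖ = 1 ∧ ‖p.2‖ = 1 ∧ p.2 x = p.1 * ‖x‖ ∧ (p.2 y).re = 0}

variable {x y : X}

theorem birkhoffOrthogonal_of_mem_supportingFunctionals {u : X →L[ℂ] ℂ}
    (hu : u ∈ supportingFunctionals x) (huy : u y = 0) : BirkhoffOrthogonal x y := fun lam =>
  calc ‖x‖ = ‖u (x + lam • y)‖ := by simp [hu.2, huy]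
    _ ≤ ‖u‖ * ‖x + lam • y‖ := u.le_opNorm _
    _ = ‖x + lam • y‖ := by rw [hu.1, one_mul]

theorem not_birkhoffOrthogonal_self (hx : x ≠ 0) : ¬ BirkhoffOrthogonal x x := by
  intro h
  simpa [hx] using h (-1)

theorem supportingFunctionals_nonempty (hx : x ≠ 0) : (supportingFunctionals x).Nonempty :=
  exists_dual_vector ℂ x (norm_ne_zero_iff.2 hx)

theorem mem_orthogonalityPairs_iff {ν : ℂ} {v : X →L[ℂ] ℂ} :
    (ν, v) ∈ orthogonalityPairs x y ↔
      ‖ν‖ = 1 ∧ ν⁻¹ • v ∈ supportingFunctionals x ∧ (v y).re = 0 := by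
  simp only [orthogonalityPairs, supportingFunctionals, Set.mem_ofPred_eq, smul_apply,
    smul_eq_mul]
  constructor
  · rintro ⟨hν, hv, hvx, hvy⟩
    have hν0 : ν ≠ 0 := norm_ne_zero_iff.1 (by simp [hν])
    refine ⟨hν, ⟨by simp [norm_smul, hν, hv], ?_⟩, hvy⟩
    rw [inv_mul_eq_iff_eq_mul₀ hν0, hvx]
  · rintro ⟨hν, ⟨hv, hvx⟩, hvy⟩
    have hν0 : ν ≠ 0 := norm_ne_zero_iff.1 (by simp [hν])
    rw [inv_mul_eq_iff_eq_mul₀ hν0] at hvx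
    exact ⟨hν, by simpa [norm_smul, hν] using hv, hvx, hvy⟩

theorem orthogonalityPairs_eq_image_of_supportingFunctionals_eq_singleton {u : X →L[ℂ] ℂ}
    (hJ : supportingFunctionals x = {u}) :
    orthogonalityPairs x y = (fun ν => (ν, ν • u)) '' {ν | ‖ν‖ = 1 ∧ (ν * u y).re = 0} := by
  ext ⟨ν, v⟩
  rw [mem_orthogonalityPairs_iff, hJ, Set.mem_singleton_iff]
  constructor
  · rintro ⟨hν, hv, hre⟩
    rw [inv_smul_eq_iff₀ (norm_ne_zero_iff.1 (by simp [hν]))] at hv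
    subst hv
    exact ⟨ν, ⟨hν, by simpa using hre⟩, rfl⟩
  · rintro ⟨ν, ⟨hν, hre⟩, ⟨⟩⟩
    refine ⟨hν, inv_smul_smul₀ (norm_ne_zero_iff.1 (by simp [hν])) u, by simpa using hre⟩

theorem I_smul_mem_orthogonalityPairs_self {u : X →L[ℂ] ℂ}
    (hu : u ∈ supportingFunctionals x) : (I, I • u) ∈ orthogonalityPairs x x := by
  refine mem_orthogonalityPairs_iff.2 ⟨norm_I, by rwa [inv_smul_smul₀ I_ne_zero], ?_⟩
  simp [hu.2]

theorem supportingFunctionals_subsingleton_of_orthogonalityPairs_self_eq {μ : ℂ}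
    {u : X →L[ℂ] ℂ} (hμ : μ ≠ 0) (h : orthogonalityPairs x x = {(μ, u), (-μ, -u)}) :
    (supportingFunctionals x).Subsingleton := by
  intro v hv w hw
  have hv' := I_smul_mem_orthogonalityPairs_self hv
  have hw' := I_smul_mem_orthogonalityPairs_self hw
  rw [h] at hv' hw'
  have hvw := Prod.eq_of_mem_pair_of_fst_eq (self_ne_neg.2 hμ) hv' hw' rfl
  exact smul_right_injective _ I_ne_zero (Prod.mk.inj hvw).2

end

theorem smooth_iff_orthogonality_pairs_general {X : Type*} [NormedAddCommGroup X]
    [NormedSpace ℂ X] (x : X) (hx : x ≠ 0) :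
    (∃! u : X →L[ℂ] ℂ, ‖u‖ = 1 ∧ u x = (‖x‖ : ℂ)) ↔
    (∀ y : X, ¬ (∀ lam : ℂ, ‖x + lam • y‖ ≥ ‖x‖) →
      ∃ (μ : ℂ) (u : X →L[ℂ] ℂ), ‖μ‖ = 1 ∧ ‖u‖ = 1 ∧
        {p : ℂ × (X →L[ℂ] ℂ) |
          ‖p.1‖ = 1 ∧ ‖p.2‖ = 1 ∧ p.2 x = p.1 * ‖x‖ ∧ (p.2 y).re = 0} =
        {(μ, u), (-μ, -u)}) := by
  change (∃! u, u ∈ supportingFunctionals x) ↔ ∀ y, ¬ BirkhoffOrthogonal x y →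
    ∃ μ u, ‖μ‖ = 1 ∧ ‖u‖ = 1 ∧ orthogonalityPairs x y = {(μ, u), (-μ, -u)}
  constructor
  · rintro ⟨u₀, hu₀, huniq⟩ y hy
    have hJ : supportingFunctionals x = {u₀} := Set.eq_singleton_iff_unique_mem.2 ⟨hu₀, huniq⟩
    have ha : u₀ y ≠ 0 := fun h => hy (birkhoffOrthogonal_of_mem_supportingFunctionals hu₀ h)
    have hμ : I * ‖u₀ y‖ / u₀ y ∈ {ν : ℂ | ‖ν‖ = 1 ∧ (ν * u₀ y).re = 0} := by
      rw [Complex.setOf_norm_eq_one_and_re_mul_eq_zero ha]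
      exact Set.mem_insert _ _
    refine ⟨_, (I * ‖u₀ y‖ / u₀ y) • u₀, hμ.1, by rw [norm_smul, hμ.1, hu₀.1, one_mul], ?_⟩
    rw [orthogonalityPairs_eq_image_of_supportingFunctionals_eq_singleton hJ,
      Complex.setOf_norm_eq_one_and_re_mul_eq_zero ha, Set.image_pair]
    congr 3
    exact neg_smul (I * ‖u₀ y‖ / u₀ y) u₀
  · intro h
    obtain ⟨μ, u, hμ, -, hpairs⟩ := h x (not_birkhoffOrthogonal_self hx)
    have hsub := supportingFunctionals_subsingleton_of_orthogonalityPairs_self_eq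
      (norm_ne_zero_iff.1 (by simp [hμ])) hpairs
    obtain ⟨u₀, hu₀⟩ := supportingFunctionals_nonempty hx
    exact ⟨u₀, hu₀, fun v hv => hsub hv hu₀⟩

theorem smooth_iff_orthogonality_pairs {X : Type*} [NormedAddCommGroup X]
    [NormedSpace ℂ X] [CompleteSpace X] (x : X) (hx : x ≠ 0) :
    (∃! u : X →L[ℂ] ℂ, ‖u‖ = 1 ∧ u x = (‖x‖ : ℂ)) ↔
    (∀ y : X, ¬ (∀ lam : ℂ, ‖x + lam • y‖ ≥ ‖x‖) →
      ∃ (μ : ℂ) (u : X →L[ℂ] ℂ), ‖μ‖ = 1 ∧ ‖u‖ = 1 ∧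
        {p : ℂ × (X →L[ℂ] ℂ) |
          ‖p.1‖ = 1 ∧ ‖p.2‖ = 1 ∧ p.2 x = p.1 * ‖x‖ ∧ (p.2 y).re = 0} =
        {(μ, u), (-μ, -u)}) :=
  smooth_iff_orthogonality_pairs_general x hx
end

section
/- Let X be a complex Banach space and x, y ∈ X nonzero with x a smooth point. Let S := {γ : |γ| = 1, x ⊥_γ y}. Then either S has exactly two elements, or S equals the entire unit circle (the latter occurring exactly when x ⊥_B y). -/
open Complex

lemma easy_dir {X : Type*} [NormedAddCommGroup X] [NormedSpace ℂ X]
    (x z : X) (u : X →L[ℂ] ℂ) (hu1 : ‖u‖ = 1) (hux : u x = (‖x‖ : ℂ))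
    (hre : (u z).re = 0) : ∀ t : ℝ, ‖x + (t : ℂ) • z‖ ≥ ‖x‖ := by
  intro t
  have h1 : u (x + (t : ℂ) • z) = (‖x‖ : ℂ) + (t : ℂ) * u z := by
    simp [map_add, hux, map_smul, smul_eq_mul]
  have h2 : (u (x + (t : ℂ) • z)).re = ‖x‖ := by
    rw [h1]; simp [hre]
  calc ‖x‖ = (u (x + (t : ℂ) • z)).re := h2.symm
    _ ≤ ‖u (x + (t : ℂ) • z)‖ := Complex.re_le_norm _
    _ ≤ ‖u‖ * ‖x + (t : ℂ) • z‖ := u.le_opNorm _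
    _ = ‖x + (t : ℂ) • z‖ := by rw [hu1, one_mul]

set_option maxHeartbeats 1000000 in
lemma hard_dir {X : Type*} [NormedAddCommGroup X] [NormedSpace ℂ X]
    (x z : X) (hx : x ≠ 0) (u : X →L[ℂ] ℂ) (hu1 : ‖u‖ = 1) (hux : u x = (‖x‖ : ℂ))
    (huniq : ∀ v : X →L[ℂ] ℂ, (‖v‖ = 1 ∧ v x = (‖x‖ : ℂ)) → v = u)
    (h : ∀ t : ℝ, ‖x + (t : ℂ) • z‖ ≥ ‖x‖) : (u z).re = 0 := by
  by_cases hzs : z ∈ Submodule.span ℝ {x}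
  · obtain ⟨c, rfl⟩ := Submodule.mem_span_singleton.1 hzs
    by_cases hc : c = 0
    · simp [hc]
    · exfalso
      have ht := h (-c⁻¹)
      have hzero : x + ((-c⁻¹ : ℝ) : ℂ) • c • x = 0 := by
        rw [Complex.coe_smul, smul_smul]
        have : -c⁻¹ * c = -1 := by field_simp
        rw [this, neg_one_smul, add_neg_cancel]
      rw [hzero, norm_zero] at ht
      exact hx (norm_le_zero_iff.1 ht)
  · have hz0 : z ≠ 0 := fun h0 => hzs (h0 ▸ (Submodule.span ℝ {x}).zero_mem)
    -- the partial linear map on span {z} sending z to 0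
    set f0 : X →ₗ.[ℝ] ℝ :=
      LinearPMap.mkSpanSingleton' z (0 : ℝ) (fun c _ => smul_zero c) with hf0
    have hf0dom : f0.domain = (ℝ ∙ z) := LinearPMap.domain_mkSpanSingleton ..
    have hxd : x ∉ f0.domain := by
      rw [hf0dom]
      intro hmem
      obtain ⟨a, ha⟩ := Submodule.mem_span_singleton.1 hmem
      have ha0 : a ≠ 0 := by rintro rfl; simp at ha; exact hx ha.symm
      exact hzs (Submodule.mem_span_singleton.2 ⟨a⁻¹, by rw [← ha, smul_smul, inv_mul_cancel₀ ha0, one_smul]⟩)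
    set f : X →ₗ.[ℝ] ℝ := f0.supSpanSingleton x ‖x‖ hxd with hf
    -- value computation
    have happ : ∀ (b c : ℝ) (hmem), f ⟨b • z + c • x, hmem⟩ = c * ‖x‖ := by
      intro b c hmem
      have hm1 : b • z ∈ f0.domain := by rw [hf0dom]; exact Submodule.smul_mem _ _ (Submodule.mem_span_singleton_self z)
      have hthis := f0.supSpanSingleton_apply_mk x ‖x‖ hxd (b • z) hm1 c
      have h0 : f0 ⟨b • z, hm1⟩ = b • (0 : ℝ) :=
        LinearPMap.mkSpanSingleton'_apply z 0 _ b hm1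
      have : (f ⟨b • z + c • x, hmem⟩ : ℝ) = f0 ⟨b • z, hm1⟩ + c • ‖x‖ := hthis
      rw [this, h0]
      simp
    -- norm bound
    have hbound : ∀ w : f.domain, ‖f w‖ ≤ 1 * ‖(w : X)‖ := by
      intro w
      have hwmem : (w : X) ∈ f0.domain ⊔ (ℝ ∙ x) := w.2
      obtain ⟨w1, hw1, w2, hw2, hsum⟩ := Submodule.mem_sup.1 hwmem
      rw [hf0dom] at hw1
      obtain ⟨b, rfl⟩ := Submodule.mem_span_singleton.1 hw1
      obtain ⟨c, rfl⟩ := Submodule.mem_span_singleton.1 hw2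
      have hw : w = ⟨b • z + c • x, hsum ▸ w.2⟩ := Subtype.ext hsum.symm
      rw [hw, happ b c _, one_mul]
      have hkey : |c| * ‖x‖ ≤ ‖b • z + c • x‖ := by
        rcases eq_or_ne c 0 with rfl | hc
        · simp
        · have e2 : b • z + c • x = c • (x + (c⁻¹ * b) • z) := by
            rw [smul_add, smul_smul, mul_inv_cancel_left₀ hc, add_comm]
          have hge : ‖x‖ ≤ ‖x + (c⁻¹ * b) • z‖ := by
            rw [← Complex.coe_smul]; exact h _
          rw [e2, norm_smul, Real.norm_eq_abs]
          exact mul_le_mul_of_nonneg_left hge (abs_nonneg c)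
      calc ‖c * ‖x‖‖ = |c| * ‖x‖ := by
            rw [Real.norm_eq_abs, abs_mul, _root_.abs_of_nonneg (norm_nonneg x)]
        _ ≤ ‖b • z + c • x‖ := hkey
    set F : f.domain →L[ℝ] ℝ := LinearMap.mkContinuous f.toFun 1 hbound with hF
    obtain ⟨g, hgext, hgnorm⟩ := exists_extension_norm_eq f.domain F
    have hgle : ‖g‖ ≤ 1 := by
      rw [hgnorm]; exact LinearMap.mkContinuous_norm_le _ zero_le_one _
    have hxmem : x ∈ f.domain := by
      have : x = (0 : ℝ) • z + (1 : ℝ) • x := by simp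
      exact Submodule.mem_sup.2 ⟨(0:ℝ) • z, by rw [hf0dom]; exact Submodule.smul_mem _ (0:ℝ) (Submodule.mem_span_singleton_self z), (1:ℝ) • x, Submodule.mem_span_singleton.2 ⟨1, rfl⟩, by simp⟩
    have hzmem : z ∈ f.domain := by
      exact Submodule.mem_sup.2 ⟨z, by rw [hf0dom]; exact Submodule.mem_span_singleton_self z, 0, Submodule.zero_mem _, by simp⟩
    have hgx : g x = ‖x‖ := by
      have h1 := hgext ⟨x, hxmem⟩
      have h2 : F ⟨x, hxmem⟩ = 1 * ‖x‖ := by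
        have : (⟨x, hxmem⟩ : f.domain) = ⟨(0:ℝ) • z + (1:ℝ) • x, by simpa using hxmem⟩ := by
          apply Subtype.ext; simp
        rw [hF]
        show f.toFun ⟨x, hxmem⟩ = 1 * ‖x‖
        show f ⟨x, hxmem⟩ = 1 * ‖x‖
        rw [this]; exact happ 0 1 _
      rw [h1, h2, one_mul]
    have hgz : g z = 0 := by
      have h1 := hgext ⟨z, hzmem⟩
      have h2 : F ⟨z, hzmem⟩ = 0 * ‖x‖ := by
        have : (⟨z, hzmem⟩ : f.domain) = ⟨(1:ℝ) • z + (0:ℝ) • x, by simpa using hzmem⟩ := by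
          apply Subtype.ext; simp
        rw [hF]
        show f ⟨z, hzmem⟩ = 0 * ‖x‖
        rw [this]; exact happ 1 0 _
      rw [h1, h2, zero_mul]
    -- extend to a complex functional
    set G : X →L[ℂ] ℂ := g.extendTo𝕜' with hG
    have hGre : ∀ w : X, (G w).re = g w := by
      intro w
      rw [hG]; show ((StrongDual.extendRCLike (𝕜 := ℂ) g) w).re = g w; rw [StrongDual.extendRCLike_apply]
      simp
    have hGnorm : ‖G‖ = ‖g‖ := ContinuousLinearMap.norm_extendTo𝕜' g
    clear_value G
    have hGle : ‖G‖ ≤ 1 := hGnorm ▸ hgle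
    have hGxre : (G x).re = ‖x‖ := by rw [hGre, hgx]
    have hGxabs : ‖G x‖ ≤ ‖x‖ := by
      calc ‖G x‖ ≤ ‖G‖ * ‖x‖ := G.le_opNorm x
        _ ≤ 1 * ‖x‖ := mul_le_mul_of_nonneg_right hGle (norm_nonneg x)
        _ = ‖x‖ := one_mul _
    have him : (G x).im = 0 := by
      have h1 : (G x).re ^ 2 + (G x).im ^ 2 = ‖G x‖ ^ 2 := by
        rw [Complex.sq_norm, Complex.normSq_apply]; ring
      have h2 : ‖G x‖ ^ 2 ≤ ‖x‖ ^ 2 := by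
        apply pow_le_pow_left₀ (norm_nonneg _) hGxabs
      have h3 : (G x).re ^ 2 = ‖x‖ ^ 2 := by rw [hGxre]
      have him2 : (G x).im ^ 2 ≤ 0 := by linarith
      have := le_antisymm him2 (sq_nonneg _)
      exact pow_eq_zero_iff (two_ne_zero) |>.1 this
    have hGx : G x = (‖x‖ : ℂ) := Complex.ext (by simp [hGxre]) (by simp [him])
    have hGnorm1 : ‖G‖ = 1 := by
      refine le_antisymm hGle ?_
      have hxpos : 0 < ‖x‖ := norm_pos_iff.2 hx
      have : ‖x‖ ≤ ‖G‖ * ‖x‖ := by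
        calc ‖x‖ = ‖G x‖ := by rw [hGx]; simp
          _ ≤ ‖G‖ * ‖x‖ := G.le_opNorm x
      exact le_of_mul_le_mul_right (by linarith) hxpos
    have hGu : G = u := huniq G ⟨hGnorm1, hGx⟩
    rw [← hGu, hGre, hgz]

set_option maxHeartbeats 1000000 in
theorem directions_of_smooth_point {X : Type*} [NormedAddCommGroup X]
    [NormedSpace ℂ X] [CompleteSpace X] (x y : X) (hx : x ≠ 0) (hy : y ≠ 0)
    (hsmooth : ∃! u : X →L[ℂ] ℂ, ‖u‖ = 1 ∧ u x = (‖x‖ : ℂ)) :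
    (({γ : ℂ | ‖γ‖ = 1 ∧ ∀ t : ℝ, ‖x + (t : ℂ) • γ • y‖ ≥ ‖x‖}).ncard = 2 ∨
      {γ : ℂ | ‖γ‖ = 1 ∧ ∀ t : ℝ, ‖x + (t : ℂ) • γ • y‖ ≥ ‖x‖} = Metric.sphere (0 : ℂ) 1) ∧
    ({γ : ℂ | ‖γ‖ = 1 ∧ ∀ t : ℝ, ‖x + (t : ℂ) • γ • y‖ ≥ ‖x‖} = Metric.sphere (0 : ℂ) 1 ↔
      ∀ lam : ℂ, ‖x + lam • y‖ ≥ ‖x‖) := by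
  obtain ⟨u, ⟨hu1, hux⟩, huniq⟩ := hsmooth
  have huniq' : ∀ v : X →L[ℂ] ℂ, (‖v‖ = 1 ∧ v x = (‖x‖ : ℂ)) → v = u := fun v hv => huniq v hv
  obtain ⟨c, hc⟩ : ∃ c : ℂ, u y = c := ⟨u y, rfl⟩
  set S : Set ℂ := {γ : ℂ | ‖γ‖ = 1 ∧ ∀ t : ℝ, ‖x + (t : ℂ) • γ • y‖ ≥ ‖x‖} with hSdef
  have huy : ∀ γ : ℂ, u (γ • y) = γ * c := fun γ => by rw [map_smul, smul_eq_mul, hc]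
  have hchar : S = {γ : ℂ | ‖γ‖ = 1 ∧ (γ * c).re = 0} := by
    ext γ
    constructor
    · rintro ⟨h1, h2⟩
      refine ⟨h1, ?_⟩
      rw [← huy γ]
      exact hard_dir x (γ • y) hx u hu1 hux huniq' h2
    · rintro ⟨h1, h2⟩
      exact ⟨h1, easy_dir x (γ • y) u hu1 hux (by rw [huy γ]; exact h2)⟩
  have hSeq_of_B : (∀ lam : ℂ, ‖x + lam • y‖ ≥ ‖x‖) → S = Metric.sphere (0 : ℂ) 1 := by
    intro hB
    ext γ
    simp only [hSdef, Set.mem_setOf_eq, mem_sphere_zero_iff_norm]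
    refine ⟨fun h => h.1, fun h => ⟨h, fun t => ?_⟩⟩
    rw [smul_smul]
    exact hB _
  have hc0_of_Seq : S = Metric.sphere (0 : ℂ) 1 → c = 0 := by
    intro hSeq
    by_contra hcne
    have hcnorm : ‖c‖ ≠ 0 := by simpa using hcne
    have hγ0mem : (starRingEnd ℂ) c / ‖c‖ ∈ Metric.sphere (0 : ℂ) 1 := by
      rw [mem_sphere_zero_iff_norm, norm_div, RCLike.norm_conj]
      simp only [Complex.norm_real, Real.norm_eq_abs, _root_.abs_of_nonneg (norm_nonneg c)]
      exact div_self hcnorm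
    rw [← hSeq, hchar] at hγ0mem
    have h2 := hγ0mem.2
    have hval : (starRingEnd ℂ) c / ‖c‖ * c = ((Complex.normSq c / ‖c‖ : ℝ) : ℂ) := by
      rw [div_mul_eq_mul_div, mul_comm ((starRingEnd ℂ) c) c, Complex.mul_conj,
        Complex.ofReal_div]
    rw [hval, Complex.ofReal_re] at h2
    rcases div_eq_zero_iff.1 h2 with h | h
    · exact hcne (Complex.normSq_eq_zero.1 h)
    · exact hcnorm h
  have hB_of_c0 : c = 0 → ∀ lam : ℂ, ‖x + lam • y‖ ≥ ‖x‖ := by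
    intro hc0 lam
    have h1 : u (x + lam • y) = (‖x‖ : ℂ) := by
      rw [map_add, hux, map_smul, smul_eq_mul, hc, hc0, mul_zero, add_zero]
    calc ‖x‖ = ‖u (x + lam • y)‖ := by rw [h1]; simp
      _ ≤ ‖u‖ * ‖x + lam • y‖ := u.le_opNorm _
      _ = ‖x + lam • y‖ := by rw [hu1, one_mul]
  refine ⟨?_, ⟨fun hSeq => hB_of_c0 (hc0_of_Seq hSeq), hSeq_of_B⟩⟩
  by_cases hc0 : c = 0
  · right
    exact hSeq_of_B (hB_of_c0 hc0)
  · left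
    have hcnorm : ‖c‖ ≠ 0 := by simpa using hc0
    have hccast : ((‖c‖ : ℝ) : ℂ) ≠ 0 := Complex.ofReal_ne_zero.2 hcnorm
    set d : ℂ := Complex.I * (starRingEnd ℂ) c / ‖c‖ with hd
    have hdc : d * c = Complex.I * ‖c‖ := by
      rw [hd, div_mul_eq_mul_div, mul_assoc, mul_comm ((starRingEnd ℂ) c) c,
        Complex.mul_conj, Complex.normSq_eq_norm_sq, Complex.ofReal_pow]
      rw [sq]
      have hccast' : ((‖c‖ : ℝ) : ℂ) ≠ 0 := hccast
      rw [mul_div_assoc, mul_div_assoc, div_self hccast, mul_one]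
    have hd0 : d ≠ 0 := by
      intro h0
      rw [h0, zero_mul] at hdc
      have := hdc.symm
      rw [mul_eq_zero] at this
      rcases this with h | h
      · exact Complex.I_ne_zero h
      · exact hccast h
    have hdne : d ≠ -d := by
      intro h
      apply hd0
      have h2 : (2 : ℂ) * d = 0 := by
        have : d + d = 0 := by nth_rewrite 2 [h]; rw [add_neg_cancel]
        linear_combination this
      rcases mul_eq_zero.1 h2 with h | h
      · norm_num at h
      · exact h
    have hpair : S = {d, -d} := by
      rw [hchar]
      ext γ
      simp only [Set.mem_setOf_eq, Set.mem_insert_iff, Set.mem_singleton_iff]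
      constructor
      · rintro ⟨h1, h2⟩
        have habs : ‖γ * c‖ = ‖c‖ := by rw [norm_mul, h1, one_mul]
        have h4 : (γ * c).im ^ 2 = ‖c‖ ^ 2 := by
          have h5 : ‖γ * c‖ ^ 2 = (γ * c).re ^ 2 + (γ * c).im ^ 2 := by
            rw [Complex.sq_norm, Complex.normSq_apply]; ring
          rw [habs, h2] at h5
          linarith [h5]
        rcases sq_eq_sq_iff_eq_or_eq_neg.1 h4 with h3 | h3
        · left
          apply mul_right_cancel₀ hc0
          rw [hdc]
          apply Complex.ext
          · simp [h2]
          · simp [h3]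
        · right
          apply mul_right_cancel₀ hc0
          rw [neg_mul, hdc]
          apply Complex.ext
          · simp [h2]
          · simp [h3]
      · have hdnorm : ‖d‖ = 1 := by
          rw [hd, norm_div, norm_mul, Complex.norm_I, RCLike.norm_conj, one_mul]
          simp only [Complex.norm_real, Real.norm_eq_abs, _root_.abs_of_nonneg (norm_nonneg c)]
          exact div_self hcnorm
        rintro (rfl | rfl)
        · refine ⟨hdnorm, ?_⟩
          rw [hdc]
          simp
        · refine ⟨by rw [norm_neg]; exact hdnorm, ?_⟩
          rw [neg_mul, hdc]
          simp
    rw [hpair]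
    exact Set.ncard_pair hdne
end

section
/- Let H be a complex Hilbert space, x, y ∈ H nonzero, and γ a unimodular complex number. Then x ⊥_γ y if and only if y ⊥_{conj(γ)} x. -/
open scoped ComplexInnerProductSpace

lemma orth_iff_re_inner_eq_zero {H : Type*} [NormedAddCommGroup H] [InnerProductSpace ℂ H]
    (x z : H) :
    (∀ t : ℝ, ‖x + (t : ℂ) • z‖ ≥ ‖x‖) ↔ (inner ℂ x z : ℂ).re = 0 := by
  have expand : ∀ t : ℝ, ‖x + (t : ℂ) • z‖ ^ 2
      = ‖x‖ ^ 2 + 2 * (t * (inner ℂ x z : ℂ).re) + t ^ 2 * ‖z‖ ^ 2 := by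
    intro t
    have := @norm_add_sq ℂ H _ _ _ x ((t : ℂ) • z)
    rw [inner_smul_right] at this
    simpa [norm_smul, Complex.norm_real, mul_pow, mul_comm, mul_left_comm,
      mul_assoc] using this
  constructor
  · intro h
    by_contra hr
    set r := (inner ℂ x z : ℂ).re with hrdef
    set s : ℝ := 1 / (‖z‖ ^ 2 + 1) with hs
    have hz1 : (0:ℝ) < ‖z‖ ^ 2 + 1 := by positivity
    have hspos : 0 < s := by positivity
    set t : ℝ := -r * s with ht
    have h1 := h t
    have h2 : ‖x + (t : ℂ) • z‖ ^ 2 ≥ ‖x‖ ^ 2 := by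
      have := h1
      nlinarith [norm_nonneg x, norm_nonneg (x + (t : ℂ) • z)]
    rw [expand t] at h2
    have hslt : s * ‖z‖ ^ 2 < 1 := by
      rw [hs]
      rw [div_mul_eq_mul_div, div_lt_one hz1]
      nlinarith
    have hr2 : 0 < r ^ 2 := by positivity
    nlinarith [sq_nonneg r, mul_pos hr2 hspos]
  · intro hr t
    have h2 : ‖x + (t : ℂ) • z‖ ^ 2 ≥ ‖x‖ ^ 2 := by
      rw [expand t, hr]
      nlinarith [sq_nonneg t, sq_nonneg ‖z‖]
    nlinarith [norm_nonneg x, norm_nonneg (x + (t : ℂ) • z), h2]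

theorem hilbert_dir_orth_symm {H : Type*} [NormedAddCommGroup H] [InnerProductSpace ℂ H]
    [CompleteSpace H] (x y : H) (hx : x ≠ 0) (hy : y ≠ 0) (γ : ℂ) (hγ : ‖γ‖ = 1) :
    (∀ t : ℝ, ‖x + (t : ℂ) • γ • y‖ ≥ ‖x‖) ↔
    (∀ t : ℝ, ‖y + (t : ℂ) • (starRingEnd ℂ γ) • x‖ ≥ ‖y‖) := by
  rw [orth_iff_re_inner_eq_zero, orth_iff_re_inner_eq_zero]
  have : (inner ℂ y ((starRingEnd ℂ γ) • x) : ℂ) = starRingEnd ℂ (inner ℂ x (γ • y) : ℂ) := by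
    rw [inner_smul_right, inner_smul_right, map_mul, ← inner_conj_symm]
  rw [this, Complex.conj_re]
end

section
/- Let H be a complex Hilbert space, x, y ∈ H nonzero, and S := {γ : |γ| = 1, x ⊥_γ y}. Then either S has exactly two elements (namely ±i·⟨y,x⟩/|⟨y,x⟩| when ⟨y,x⟩ ≠ 0), or S is the whole unit circle (when ⟨y,x⟩ = 0). -/
open Complex

lemma helperA {H : Type*} [NormedAddCommGroup H] [InnerProductSpace ℂ H]
    (x v : H) (hv : v ≠ 0) :
    (∀ t : ℝ, ‖x + (t : ℂ) • v‖ ≥ ‖x‖) ↔ Complex.re (inner ℂ x v : ℂ) = 0 := by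
  have hv' : (0:ℝ) < ‖v‖ := norm_pos_iff.mpr hv
  have hb : (0:ℝ) < ‖v‖^2 := by positivity
  have hsq : ∀ t : ℝ, ‖x + (t : ℂ) • v‖^2 = ‖x‖^2 + 2 * t * Complex.re (inner ℂ x v : ℂ) + t^2 * ‖v‖^2 := by
    intro t
    rw [@norm_add_sq ℂ]
    rw [inner_smul_right]
    simp [norm_smul, Complex.mul_re]
    rw [mul_pow, _root_.sq_abs]
    ring
  constructor
  · intro h
    by_contra ha
    set a := Complex.re (inner ℂ x v : ℂ)
    have ht := h (-a / ‖v‖^2)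
    have h2 : ‖x‖^2 ≤ ‖x + ((-a / ‖v‖^2 : ℝ) : ℂ) • v‖^2 := by
      nlinarith [norm_nonneg x, norm_nonneg (x + ((-a / ‖v‖^2 : ℝ) : ℂ) • v)]
    rw [hsq] at h2
    have h3 : a^2 / ‖v‖^2 ≤ 0 := by
      have : 2 * (-a / ‖v‖^2) * a + (-a / ‖v‖^2)^2 * ‖v‖^2 = - (a^2 / ‖v‖^2) := by
        field_simp; ring
      nlinarith
    have h4 : (0:ℝ) < a^2 / ‖v‖^2 := div_pos (by positivity) hb
    linarith
  · intro h t
    have h2 : ‖x‖^2 ≤ ‖x + (t : ℂ) • v‖^2 := by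
      rw [hsq, h]; nlinarith [sq_nonneg (t * ‖v‖)]
    nlinarith [norm_nonneg x, norm_nonneg (x + (t : ℂ) • v)]

theorem hilbert_directions_two_or_all {H : Type*} [NormedAddCommGroup H]
    [InnerProductSpace ℂ H] [CompleteSpace H] (x y : H) (hx : x ≠ 0) (hy : y ≠ 0) :
    ((inner ℂ y x : ℂ) = 0 →
      {γ : ℂ | ‖γ‖ = 1 ∧ ∀ t : ℝ, ‖x + (t : ℂ) • γ • y‖ ≥ ‖x‖} = Metric.sphere (0 : ℂ) 1) ∧
    ((inner ℂ y x : ℂ) ≠ 0 →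
      {γ : ℂ | ‖γ‖ = 1 ∧ ∀ t : ℝ, ‖x + (t : ℂ) • γ • y‖ ≥ ‖x‖} =
        {Complex.I * (inner ℂ y x : ℂ) / ‖(inner ℂ y x : ℂ)‖,
         -(Complex.I * (inner ℂ y x : ℂ) / ‖(inner ℂ y x : ℂ)‖)}) := by
  set c : ℂ := inner ℂ y x with hc
  have hmem : ∀ γ : ℂ, ‖γ‖ = 1 →
      ((∀ t : ℝ, ‖x + (t : ℂ) • γ • y‖ ≥ ‖x‖) ↔ Complex.re (γ * (starRingEnd ℂ) c) = 0) := by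
    intro γ hγ
    have hγ0 : γ ≠ 0 := by intro h; rw [h, norm_zero] at hγ; norm_num at hγ
    rw [helperA x (γ • y) (smul_ne_zero hγ0 hy)]
    rw [inner_smul_right]
    have h5 : (inner ℂ x y : ℂ) = (starRingEnd ℂ) c := by
      rw [hc, inner_conj_symm]
    rw [h5]
  constructor
  · intro h0
    ext γ
    simp only [Set.mem_setOf_eq, Metric.mem_sphere, dist_zero_right]
    constructor
    · rintro ⟨h1, _⟩; exact h1
    · intro h1
      refine ⟨h1, (hmem γ h1).mpr ?_⟩
      rw [h0]; simp
  · intro h0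
    have hcn : (0:ℝ) < ‖c‖ := norm_pos_iff.mpr h0
    have hcc : (starRingEnd ℂ) c ≠ 0 := by simpa using h0
    have hmul : c * (starRingEnd ℂ) c = ((‖c‖:ℝ) : ℂ)^2 := by
      rw [Complex.mul_conj, Complex.normSq_eq_norm_sq]
      push_cast
      rfl
    set d : ℂ := Complex.I * c / ‖c‖ with hd
    have hcn' : ((‖c‖:ℝ) : ℂ) ≠ 0 := Complex.ofReal_ne_zero.mpr hcn.ne'
    have hdnorm : ‖d‖ = 1 := by
      rw [hd, norm_div, norm_mul, Complex.norm_I, one_mul, Complex.norm_real,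
        Real.norm_eq_abs, abs_of_pos hcn, div_self hcn.ne']
    have hdre : Complex.re (d * (starRingEnd ℂ) c) = 0 := by
      have : d * (starRingEnd ℂ) c = Complex.I * ((‖c‖:ℝ):ℂ) := by
        rw [hd, div_mul_eq_mul_div, mul_assoc, hmul, mul_div_assoc, sq, mul_div_assoc,
          div_self hcn', mul_one]
      rw [this]; simp
    ext γ
    simp only [Set.mem_setOf_eq, Set.mem_insert_iff, Set.mem_singleton_iff]
    constructor
    · rintro ⟨h1, h2⟩
      rw [hmem γ h1] at h2
      set z : ℂ := γ * (starRingEnd ℂ) c with hz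
      have hznorm : ‖z‖ = ‖c‖ := by rw [hz, norm_mul, h1, one_mul]; simp
      have hzim : z = (z.im : ℂ) * Complex.I := by
        apply Complex.ext <;> simp [h2]
      have habs : |z.im| = ‖c‖ := by
        rw [← hznorm, hzim]; simp
      have him : z.im = ‖c‖ ∨ z.im = -‖c‖ := abs_eq (le_of_lt hcn) |>.mp habs
      have hγz : γ = z / (starRingEnd ℂ) c := by rw [hz]; field_simp
      have key : ((‖c‖:ℝ):ℂ) * Complex.I / (starRingEnd ℂ) c = Complex.I * c / ‖c‖ := by
        rw [div_eq_div_iff hcc hcn']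
        rw [mul_comm ((‖c‖:ℂ) * Complex.I), ← mul_assoc, mul_assoc Complex.I, hmul]
        ring
      rcases him with him | him
      · left
        rw [hγz, hzim, him, hd]
        exact key
      · right
        rw [hγz, hzim, him, hd]
        push_cast
        rw [neg_mul, neg_div, key]
    · intro h
      have hγn : ‖γ‖ = 1 := by
        rcases h with h | h <;> rw [h] <;> simp [hdnorm]
      refine ⟨hγn, (hmem γ hγn).mpr ?_⟩
      rcases h with h | h <;> rw [h] <;> simp [hdre]
end

section
/- Let H be a complex Hilbert space, T, A ∈ L(H) bounded linear operators, and H₀ a subspace of H on which T is a scalar multiple of an isometry (i.e., ‖Tx‖ = c‖x‖ for all x ∈ H₀ and some c ≥ 0). Then the set W_A(T) := {⟨Ax, Tx⟩ : x ∈ H₀, ‖x‖ = 1} is a convex subset of ℂ. -/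
theorem generalized_toeplitz_hausdorff {H : Type*} [NormedAddCommGroup H]
    [InnerProductSpace ℂ H] [CompleteSpace H] (T A : H →L[ℂ] H)
    (H₀ : Submodule ℂ H) (c : ℝ) (hc : 0 ≤ c)
    (hT : ∀ x ∈ H₀, ‖T x‖ = c * ‖x‖) :
    Convex ℝ {z : ℂ | ∃ x ∈ H₀, ‖x‖ = 1 ∧ (inner ℂ (T x) (A x) : ℂ) = z} := by
  rintro z₁ ⟨u, hu₀, hu1, hqu⟩ z₂ ⟨v, hv₀, hv1, hqv⟩ p q hp hq hpq
  by_cases hz : z₂ = z₁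
  · refine ⟨u, hu₀, hu1, ?_⟩
    subst hz
    rw [hqu]
    have : (p : ℂ) + (q : ℂ) = 1 := by push_cast; exact_mod_cast congrArg (Complex.ofReal ·) hpq
    simp only [smul_eq_mul, Complex.real_smul]
    linear_combination (-z₂) * this
  have hd0 : z₂ - z₁ ≠ 0 := sub_ne_zero.2 hz
  set d : ℂ := z₂ - z₁ with hd
  set S : H →L[ℂ] H := d⁻¹ • ((ContinuousLinearMap.adjoint T).comp A
      - z₁ • ContinuousLinearMap.id ℂ H) with hS
  have key : ∀ y w : H, (inner ℂ y (S w) : ℂ)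
      = ((inner ℂ (T y) (A w) : ℂ) - z₁ * inner ℂ y w) / d := by
    intro y w
    simp [hS, inner_smul_right, inner_sub_right,
      ContinuousLinearMap.adjoint_inner_right, div_eq_inv_mul]
  have hinneru : (inner ℂ u u : ℂ) = 1 := by
    rw [inner_self_eq_norm_sq_to_K, hu1]; norm_num
  have hinnerv : (inner ℂ v v : ℂ) = 1 := by
    rw [inner_self_eq_norm_sq_to_K, hv1]; norm_num
  have hSu : (inner ℂ u (S u) : ℂ) = 0 := by rw [key, hqu, hinneru]; simp
  have hSv : (inner ℂ v (S v) : ℂ) = 1 := by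
    rw [key, hqv, hinnerv, mul_one, div_self hd0]
  set a' : ℂ := inner ℂ u (S v) with ha'
  set b' : ℂ := inner ℂ v (S u) with hb'
  set w : ℂ := a' - (starRingEnd ℂ) b' with hw
  set l : ℂ := if w = 0 then 1 else (starRingEnd ℂ) w / ‖w‖ with hl
  have hlnorm : ‖l‖ = 1 := by
    rw [hl]
    split_ifs with h0
    · simp
    · rw [norm_div]
      simp only [RCLike.norm_conj, Complex.norm_real, norm_norm]
      exact div_self (norm_ne_zero_iff.2 h0)
  have hlw : (l * w).im = 0 := by
    rw [hl]
    split_ifs with h0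
    · simp [h0]
    · have : (starRingEnd ℂ) w / (‖w‖ : ℂ) * w = ((Complex.normSq w / ‖w‖ : ℝ) : ℂ) := by
        push_cast
        rw [div_mul_eq_mul_div, mul_comm, Complex.mul_conj]
      rw [this, Complex.ofReal_im]
  set m : ℂ := l * a' + (starRingEnd ℂ) l * b' with hm
  have hmim : m.im = 0 := by
    have : m.im = (l * w).im := by
      simp only [hm, hw, Complex.add_im, Complex.mul_im, Complex.sub_re, Complex.sub_im,
        Complex.conj_re, Complex.conj_im]
      ring
    rw [this, hlw]
  have hmre : m = ((m.re : ℝ) : ℂ) := by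
    rw [← Complex.re_add_im m, hmim]; simp
  have hll : (starRingEnd ℂ) l * l = 1 := by
    rw [Complex.conj_mul', hlnorm]
    norm_num
  set xs : ℝ → H := fun s => (((1 - s : ℝ) : ℂ)) • u + (((s : ℝ) : ℂ) * l) • v with hxs
  have hexpand : ∀ s : ℝ, (inner ℂ (xs s) (S (xs s)) : ℂ)
      = (s : ℂ) ^ 2 + (s : ℂ) * (1 - (s : ℂ)) * m := by
    intro s
    simp only [hxs, map_add, map_smul, inner_add_left, inner_add_right,
      inner_smul_left, inner_smul_right, hSu, hSv, ← ha', ← hb', Complex.conj_ofReal,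
      map_mul]
    push_cast
    linear_combination ((s : ℂ)) ^ 2 * hll + (s : ℂ) * (1 - (s : ℂ)) * hm
  have hne : ∀ s : ℝ, xs s ≠ 0 := by
    intro s h0
    have hcoef : (((1 - s : ℝ) : ℂ)) • u = -((((s : ℝ) : ℂ) * l) • v) := by
      rw [eq_neg_iff_add_eq_zero]; exact h0
    have hnorm : |1 - s| = |s| := by
      have h1 := congrArg norm hcoef
      rw [norm_smul, norm_neg, norm_smul, hu1, hv1, norm_mul, hlnorm] at h1
      simp only [Real.norm_eq_abs, Complex.norm_real, mul_one] at h1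
      exact h1
    have hs2 : s = 1 / 2 := by
      have h2 : (1 - s) ^ 2 = s ^ 2 := by
        rw [← sq_abs (1 - s), ← sq_abs s, hnorm]
      nlinarith [h2]
    have hα : ((1 - s : ℝ) : ℂ) ≠ 0 := by rw [hs2]; norm_num
    have huv : u = (-(((1 - s : ℝ) : ℂ)⁻¹ * (((s : ℝ) : ℂ) * l))) • v := by
      have h3 := congrArg (fun y => ((1 - s : ℝ) : ℂ)⁻¹ • y) hcoef
      simp only [smul_smul, smul_neg] at h3
      rw [inv_mul_cancel₀ hα, one_smul, ← neg_smul] at h3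
      exact h3
    set μ : ℂ := -(((1 - s : ℝ) : ℂ)⁻¹ * (((s : ℝ) : ℂ) * l)) with hμ
    have hμn : ‖μ‖ = 1 := by
      rw [hμ, norm_neg, norm_mul, norm_mul, norm_inv, Complex.norm_real,
        Complex.norm_real, hlnorm, hs2]
      norm_num
    have hconj : (starRingEnd ℂ) μ * μ = 1 := by
      rw [Complex.conj_mul', hμn]; norm_num
    have hcontra : (inner ℂ u (S u) : ℂ) = 1 := by
      rw [huv, map_smul, inner_smul_left, inner_smul_right, hSv, mul_one, hconj]
    rw [hSu] at hcontra
    exact zero_ne_one hcontra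
  have hxs_cont : Continuous xs := by
    apply Continuous.add
    · exact (Complex.continuous_ofReal.comp (continuous_const.sub continuous_id)).smul
        continuous_const
    · exact ((Complex.continuous_ofReal.mul continuous_const)).smul continuous_const
  set φ : ℝ → ℝ := fun s => (s ^ 2 + s * (1 - s) * m.re) / ‖xs s‖ ^ 2 with hφ
  have hφcont : Continuous φ := by
    apply Continuous.div
    · exact ((continuous_id.pow 2).add (((continuous_id.mul
        (continuous_const.sub continuous_id))).mul continuous_const))
    · exact (hxs_cont.norm.pow 2)
    · intro s
      exact pow_ne_zero 2 (norm_ne_zero_iff.2 (hne s))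
  have hxs0 : xs 0 = u := by simp [hxs]
  have hxs1 : ‖xs 1‖ = 1 := by
    have : xs 1 = l • v := by simp [hxs]
    rw [this, norm_smul, hlnorm, hv1, one_mul]
  have hφ0 : φ 0 = 0 := by simp [hφ]
  have hφ1 : φ 1 = 1 := by
    rw [hφ]; simp only [hxs1]; norm_num
  have hq1 : q ∈ Set.Icc (φ 0) (φ 1) := by
    rw [hφ0, hφ1]
    exact ⟨hq, by linarith⟩
  obtain ⟨s, hsI, hsq⟩ := intermediate_value_Icc (by norm_num : (0:ℝ) ≤ 1)
    hφcont.continuousOn hq1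
  set r : ℝ := ‖xs s‖ with hr
  have hr0 : r ≠ 0 := norm_ne_zero_iff.2 (hne s)
  refine ⟨((r⁻¹ : ℝ) : ℂ) • xs s, ?_, ?_, ?_⟩
  · apply H₀.smul_mem
    apply H₀.add_mem (H₀.smul_mem _ hu₀) (H₀.smul_mem _ hv₀)
  · rw [norm_smul, Complex.norm_real, norm_inv, norm_norm, ← hr, inv_mul_cancel₀ hr0]
  · have hx1 : ‖((r⁻¹ : ℝ) : ℂ) • xs s‖ = 1 := by
      rw [norm_smul, Complex.norm_real, norm_inv, norm_norm, ← hr, inv_mul_cancel₀ hr0]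
    have hinx : (inner ℂ (((r⁻¹ : ℝ) : ℂ) • xs s) (((r⁻¹ : ℝ) : ℂ) • xs s) : ℂ) = 1 := by
      rw [inner_self_eq_norm_sq_to_K, hx1]; norm_num
    have hSx : (inner ℂ (((r⁻¹ : ℝ) : ℂ) • xs s) (S (((r⁻¹ : ℝ) : ℂ) • xs s)) : ℂ)
        = ((q : ℝ) : ℂ) := by
      rw [map_smul, inner_smul_left, inner_smul_right, Complex.conj_ofReal, hexpand s]
      rw [← hsq, hφ]
      rw [hmre]
      push_cast
      simp only [Complex.ofReal_re, ← hr]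
      field_simp
    rw [key, hinx, mul_one] at hSx
    have hTA : (inner ℂ (T (((r⁻¹ : ℝ) : ℂ) • xs s)) (A (((r⁻¹ : ℝ) : ℂ) • xs s)) : ℂ)
        = z₁ + d * q := by
      rw [div_eq_iff hd0] at hSx
      linear_combination hSx
    rw [hTA, hd]
    have hp1 : (p : ℂ) = 1 - (q : ℂ) := by
      have : (p : ℂ) + (q : ℂ) = 1 := by exact_mod_cast congrArg (Complex.ofReal ·) hpq
      linear_combination this
    simp only [smul_eq_mul, Complex.real_smul]
    rw [hp1]
    ring
end

section
/- Let H be a complex Hilbert space and A ∈ L(H) a bounded linear operator. Then the numerical range W(A) := {⟨Ax, x⟩ : ‖x‖ = 1} is a convex subset of ℂ (Toeplitz-Hausdorff Theorem). -/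
open Complex

private lemma key_lemma {H : Type*} [NormedAddCommGroup H] [InnerProductSpace ℂ H]
    (B : H →L[ℂ] H) (x y : H) (hx : ‖x‖ = 1) (hy : ‖y‖ = 1)
    (hbx : (inner ℂ x (B x) : ℂ) = 0) (hby : (inner ℂ y (B y) : ℂ) = 1)
    (t : ℝ) (ht0 : 0 ≤ t) (ht1 : t ≤ 1) :
    ∃ u : H, ‖u‖ = 1 ∧ (inner ℂ u (B u) : ℂ) = (t : ℂ) := by
  classical
  set c : ℂ := inner ℂ x (B y) with hc
  set d : ℂ := inner ℂ y (B x) with hd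
  set e : ℂ := c - (starRingEnd ℂ) d with he
  set ω : ℂ := if e = 0 then 1 else (‖e‖ : ℂ)⁻¹ * e with hω
  have hωnorm : ‖ω‖ = 1 := by
    by_cases h : e = 0
    · simp [hω, h]
    · simp [hω, h, norm_mul, norm_inv, norm_norm]
  have him : ((starRingEnd ℂ) ω * c + ω * d).im = 0 := by
    by_cases h : e = 0
    · have hcd : c = (starRingEnd ℂ) d := by
        have := sub_eq_zero.mp (he ▸ h)
        exact this
      simp [hω, h, hcd, Complex.add_im, Complex.conj_im]
    · rw [hω, if_neg h]
      have hfac : (starRingEnd ℂ) ((‖e‖ : ℂ)⁻¹ * e) * c + (‖e‖ : ℂ)⁻¹ * e * d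
          = (‖e‖ : ℂ)⁻¹ * ((starRingEnd ℂ) e * c + e * d) := by
        rw [map_mul, map_inv₀, Complex.conj_ofReal]
        ring
      have key2 : (starRingEnd ℂ) e * c + e * d
          = ((Complex.normSq c - Complex.normSq d : ℝ) : ℂ) := by
        rw [he, map_sub, Complex.conj_conj]
        push_cast [Complex.normSq_eq_conj_mul_self]
        ring
      rw [hfac, key2, ← Complex.ofReal_inv, ← Complex.ofReal_mul]
      simp
  set K : ℝ := ((starRingEnd ℂ) ω * c + ω * d).re with hKdef
  have hK : (starRingEnd ℂ) ω * c + ω * d = (K : ℂ) := by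
    apply Complex.ext
    · simp [hKdef]
    · simp [him]
  set x' : H := ω • x with hx'def
  have hx' : ‖x'‖ = 1 := by rw [hx'def, norm_smul, hωnorm, hx, mul_one]
  have hbx' : (inner ℂ x' (B x') : ℂ) = 0 := by
    rw [hx'def, map_smul, inner_smul_left, inner_smul_right, hbx]
    ring
  set p : ℝ → H := fun s => ((1 - s : ℝ) : ℂ) • x' + ((s : ℝ) : ℂ) • y with hp
  have hinner : ∀ s : ℝ, (inner ℂ (p s) (B (p s)) : ℂ)
      = (((1 - s) * s : ℝ) : ℂ) * K + ((s : ℝ) : ℂ) ^ 2 := by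
    intro s
    have hBp : B (p s) = ((1 - s : ℝ) : ℂ) • B x' + ((s : ℝ) : ℂ) • B y := by
      simp [hp, map_add, map_smul]
    rw [hp]
    simp only [hBp, map_add, map_smul, inner_add_left, inner_add_right, inner_smul_left, inner_smul_right,
      Complex.conj_ofReal, hbx', hby]
    have hcross : (inner ℂ x' (B y) : ℂ) = (starRingEnd ℂ) ω * c := by
      rw [hx'def, inner_smul_left, hc]
    have hcross2 : (inner ℂ y (B x') : ℂ) = ω * d := by
      rw [hx'def, map_smul, inner_smul_right, hd]
    rw [hcross, hcross2]
    push_cast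
    linear_combination ((1 - s : ℂ) * s) * hK
  have hpne : ∀ s : ℝ, 0 ≤ s → s ≤ 1 → p s ≠ 0 := by
    intro s hs0 hs1 hcon
    by_cases hs : s = 0
    · rw [hp] at hcon
      simp only [hs] at hcon
      simp at hcon
      rw [hcon] at hx'
      simp at hx'
    · have hsne : ((s : ℝ) : ℂ) ≠ 0 := Complex.ofReal_ne_zero.mpr hs
      have h1 : ((s : ℝ) : ℂ) • y = (((s : ℝ) : ℂ) - 1) • x' := by
        have h0 : (((1 - s : ℝ)) : ℂ) • x' + ((s : ℝ) : ℂ) • y = 0 := by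
          rw [hp] at hcon; exact hcon
        have h0' : ((1 : ℂ) - ((s : ℝ) : ℂ)) • x' + ((s : ℝ) : ℂ) • y = 0 := by
          rw [← h0]; push_cast; ring_nf
        linear_combination (norm := module) h0'
      have hy' : y = ((((s : ℝ) : ℂ) - 1) / ((s : ℝ) : ℂ)) • x' := by
        rw [div_eq_inv_mul, ← smul_smul, ← h1, smul_smul, inv_mul_cancel₀ hsne, one_smul]
      rw [hy', map_smul, inner_smul_left, inner_smul_right, hbx'] at hby
      simp at hby
  -- the real-valued function along the path
  set g : ℝ → ℝ := fun s => ((1 - s) * s * K + s ^ 2) / ‖p s‖ ^ 2 with hg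
  have hpc : Continuous p := by
    apply Continuous.add
    · exact (Complex.continuous_ofReal.comp (continuous_const.sub continuous_id)).smul
        continuous_const
    · exact Complex.continuous_ofReal.smul continuous_const
  have hgc : ContinuousOn g (Set.Icc 0 1) := by
    apply ContinuousOn.div
    · fun_prop
    · fun_prop
    · intro s hs
      exact pow_ne_zero 2 (norm_ne_zero_iff.mpr (hpne s hs.1 hs.2))
  have hp0 : p 0 = x' := by simp [hp]
  have hp1 : p 1 = y := by simp [hp]
  have hg0 : g 0 = 0 := by simp [hg]
  have hg1 : g 1 = 1 := by simp [hg, hp1, hy]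
  have hmem : t ∈ Set.Icc (g 0) (g 1) := by
    rw [hg0, hg1]; exact ⟨ht0, ht1⟩
  obtain ⟨s, hsmem, hgs⟩ := intermediate_value_Icc (by norm_num : (0:ℝ) ≤ 1) hgc hmem
  have hpsne : p s ≠ 0 := hpne s hsmem.1 hsmem.2
  have hns : ‖p s‖ ≠ 0 := norm_ne_zero_iff.mpr hpsne
  refine ⟨(‖p s‖⁻¹ : ℝ) • p s, ?_, ?_⟩
  · rw [norm_smul]
    simp [hns]
  · have hsmul : ((‖p s‖⁻¹ : ℝ) • p s) = ((‖p s‖⁻¹ : ℝ) : ℂ) • p s :=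
      (algebraMap_smul ℂ _ _).symm
    rw [hsmul, map_smul, inner_smul_left, inner_smul_right, Complex.conj_ofReal, hinner]
    have : t = ((1 - s) * s * K + s ^ 2) / ‖p s‖ ^ 2 := hgs.symm
    rw [this]
    push_cast
    field_simp

theorem toeplitz_hausdorff {H : Type*} [NormedAddCommGroup H]
    [InnerProductSpace ℂ H] [CompleteSpace H] (A : H →L[ℂ] H) :
    Convex ℝ {z : ℂ | ∃ x : H, ‖x‖ = 1 ∧ (inner ℂ x (A x) : ℂ) = z} := by
  rintro z₁ ⟨x, hx, hAx⟩ z₂ ⟨y, hy, hAy⟩ a b ha hb hab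
  by_cases hz : z₁ = z₂
  · refine ⟨x, hx, ?_⟩
    rw [hAx, hz]
    have : (a : ℂ) + (b : ℂ) = 1 := by exact_mod_cast congrArg (Complex.ofReal) hab
    simp [Complex.real_smul]
    linear_combination (-z₂) * this
  · have hzne : z₂ - z₁ ≠ 0 := sub_ne_zero.mpr (Ne.symm hz)
    set B : H →L[ℂ] H := (z₂ - z₁)⁻¹ • (A - z₁ • ContinuousLinearMap.id ℂ H) with hB
    have hBapp : ∀ v : H, B v = (z₂ - z₁)⁻¹ • (A v - z₁ • v) := by
      intro v; simp [hB]
    have hinnerx : ∀ v : H, ‖v‖ = 1 → (inner ℂ v (B v) : ℂ)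
        = (z₂ - z₁)⁻¹ * ((inner ℂ v (A v) : ℂ) - z₁) := by
      intro v hv
      rw [hBapp, inner_smul_right, inner_sub_right, inner_smul_right,
        inner_self_eq_norm_sq_to_K, hv]
      push_cast
      ring
    have hbx : (inner ℂ x (B x) : ℂ) = 0 := by
      rw [hinnerx x hx, hAx]; simp
    have hby : (inner ℂ y (B y) : ℂ) = 1 := by
      rw [hinnerx y hy, hAy]
      field_simp
    have hb1 : b ≤ 1 := by linarith
    obtain ⟨u, hu, huB⟩ := key_lemma B x y hx hy hbx hby b hb hb1
    refine ⟨u, hu, ?_⟩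
    have := hinnerx u hu
    rw [huB] at this
    have ha' : a = 1 - b := by linarith
    rw [Complex.real_smul, Complex.real_smul, ha']
    have hAu : (inner ℂ u (A u) : ℂ) = z₁ + (z₂ - z₁) * b := by
      field_simp at this
      linear_combination -this
    rw [hAu]
    push_cast
    ring
end
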